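/- arXiv:1905.04575 — 8 statements merged into one kernel-verified Lean document; each statement's English description precedes it below -/
import Mathlib

section
/- Every linearly continuous function f : X → ℝ on a finite-dimensional Hausdorff topological vector space X over ℝ is of the first Baire class, i.e., f is the pointwise limit of a sequence of continuous functions from X to ℝ. -/
open Topology Filter Set TopologicalSpace

section Definitions

variable {X Y : Type*}

/-- A set `U` is functionally open if it is the preimage of an open set of `ℝ`
under a continuous real-valued function. -/
def FunctionallyOpen [TopologicalSpace Y] (U : Set Y) : Prop :=
  ∃ g : Y → ℝ, Continuous g ∧ ∃ V : Set ℝ, IsOpen V ∧ U = g ⁻¹' V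

/-- A set is `Fσ` if it is a countable union of closed sets. -/
def IsFSigma [TopologicalSpace X] (s : Set X) : Prop :=
  ∃ F : ℕ → Set X, (∀ n, IsClosed (F n)) ∧ s = ⋃ n, F n

/-- A function is `Fσ`-measurable if preimages of functionally open sets are `Fσ`. -/
def FSigmaMeasurable [TopologicalSpace X] [TopologicalSpace Y] (f : X → Y) : Prop :=
  ∀ U : Set Y, FunctionallyOpen U → IsFSigma (f ⁻¹' U)

/-- A set has the Baire property if its symmetric difference with some open set is meager. -/
def HasBaireProperty [TopologicalSpace X] (A : Set X) : Prop :=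
  ∃ O : Set X, IsOpen O ∧ IsMeagre (symmDiff O A)

/-- A function is BP-measurable if preimages of functionally open sets have the Baire
property. -/
def BPMeasurable [TopologicalSpace X] [TopologicalSpace Y] (f : X → Y) : Prop :=
  ∀ U : Set Y, FunctionallyOpen U → HasBaireProperty (f ⁻¹' U)

/-- A function on a topological vector space is linearly continuous if its restriction to
every affine line is continuous. -/
def LinearlyContinuous [AddCommGroup X] [Module ℝ X] [TopologicalSpace X] [TopologicalSpace Y]
    (f : X → Y) : Prop :=
  ∀ x v : X, Continuous fun t : ℝ => f (x + t • v)

/-- A function is quasi-continuous if for every point `x`, every neighborhood `V` of `x`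
and every neighborhood `W` of `f x` there is a nonempty open `U ⊆ V` with `f '' U ⊆ W`. -/
def QuasiContinuous [TopologicalSpace X] [TopologicalSpace Y] (f : X → Y) : Prop :=
  ∀ x : X, ∀ V ∈ 𝓝 x, ∀ W ∈ 𝓝 (f x),
    ∃ U : Set X, IsOpen U ∧ U.Nonempty ∧ U ⊆ V ∧ f '' U ⊆ W

/-- A set `U` is conical at `x` if it is nonempty and contains the open segment from `x`
to each of its points. -/
def ConicalAt [AddCommGroup X] [Module ℝ X] (x : X) (U : Set X) : Prop :=
  U.Nonempty ∧ ∀ u ∈ U, ∀ t : ℝ, 0 < t → t < 1 → (1 - t) • x + t • u ∈ U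

/-- Conical quasi-continuity. -/
def ConicallyQuasiContinuous [AddCommGroup X] [Module ℝ X] [TopologicalSpace X]
    [TopologicalSpace Y] (f : X → Y) : Prop :=
  ∀ x : X, ∀ V : Set X, IsOpen V → ConicalAt x V → ∀ W : Set Y, IsOpen W → f x ∈ W →
    ∃ U : Set X, IsOpen U ∧ ConicalAt x U ∧ U ⊆ V ∧ f '' U ⊆ W

/-- `L` is an ℓ-neighborhood of `A`. -/
def IsLNbhd [AddCommGroup X] [Module ℝ X] (L A : Set X) : Prop :=
  ∀ a ∈ A, ∀ v : X, ∃ ε > (0 : ℝ), ∀ t : ℝ, 0 ≤ t → t < ε → a + t • v ∈ L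

/-- A set `A` is ℓ-miserable if `A ⊆ closure (X \ L)` for some closed ℓ-neighborhood `L`
of `A`. -/
def LMiserable [AddCommGroup X] [Module ℝ X] [TopologicalSpace X] (A : Set X) : Prop :=
  ∃ L : Set X, IsClosed L ∧ IsLNbhd L A ∧ A ⊆ closure Lᶜ

/-- A set is σ̄-ℓ-miserable if it is a countable union of closed ℓ-miserable sets. -/
def SigmaLMiserable [AddCommGroup X] [Module ℝ X] [TopologicalSpace X] (A : Set X) : Prop :=
  ∃ F : ℕ → Set X, (∀ n, IsClosed (F n) ∧ LMiserable (F n)) ∧ A = ⋃ n, F n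

/-- A function is of the first Baire class if it is a pointwise limit of a sequence of
continuous functions. -/
def BaireClassOne [TopologicalSpace X] [TopologicalSpace Y] (f : X → Y) : Prop :=
  ∃ g : ℕ → X → Y, (∀ n, Continuous (g n)) ∧
    ∀ x, Tendsto (fun n => g n x) atTop (𝓝 (f x))

/-- A topological space is cosmic if it is a continuous image of a separable metrizable
space. -/
def CosmicSpace (X : Type*) [TopologicalSpace X] : Prop :=
  ∃ (M : Type) (_ : TopologicalSpace M), MetrizableSpace M ∧ SeparableSpace M ∧
    ∃ g : M → X, Continuous g ∧ Function.Surjective g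

/-- A set `C` is strictly convex if for any distinct points of its closure the open segment
between them lies in `C`. -/
def StrictlyConvexSet [AddCommGroup X] [Module ℝ X] [TopologicalSpace X] (C : Set X) : Prop :=
  ∀ x ∈ closure C, ∀ y ∈ closure C, x ≠ y →
    ∀ t : ℝ, 0 < t → t < 1 → (1 - t) • x + t • y ∈ C

/-- A function is σ̄-continuous if the space is a countable union of closed sets on each of
which the function is continuous. -/
def SigmaContinuous [TopologicalSpace X] [TopologicalSpace Y] (f : X → Y) : Prop :=
  ∃ F : ℕ → Set X, (∀ n, IsClosed (F n)) ∧ (⋃ n, F n) = Set.univ ∧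
    ∀ n, ContinuousOn f (F n)

end Definitions

/-!
By induction on the dimension, a linearly continuous `f` is conically quasi-continuous: for every
point `a` and `ε > 0`, `f` stays `ε`-close to `f a` on an open cone with apex `a`. In the inductive
step fix a hyperplane `N` and a direction `u` off it. By the Baire category theorem on `N`, the
directions `w ∈ N` along which `f (a + s • (u + w))` is uniformly close to `f a` for small `s > 0`
are dense in an open set `U ⊆ N`; quasi-continuity of the slices `y ↦ f (a + s • u + y)` on `N`
(the induction hypothesis) extends the estimate to all of `U`, and the rays through `u + U` fill a
cone.

Radial continuity then shows that the closures of the sets of apexes of cones with rational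
parameters, on which `f` is `ε`-close to a rational `q`, are closed sets on which `f` stays
`ε`-close to `q`; they cover the space. A function constant on the pieces of a countable closed
cover is of the first Baire class (Tietze extension on an exhausting sequence of closed sets),
and the first Baire class is closed under uniform limits.
-/

open Metric
open scoped Pointwise

section BaireClassOne

variable {X : Type*} [TopologicalSpace X]

theorem BaireClassOne.comp_continuous {Y Z : Type*} [TopologicalSpace Y] [TopologicalSpace Z]
    {f : Y → Z} (hf : BaireClassOne f) {e : X → Y} (he : Continuous e) :
    BaireClassOne (f ∘ e) :=
  let ⟨g, hg, hgf⟩ := hf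
  ⟨fun n => g n ∘ e, fun n => (hg n).comp he, fun x => hgf (e x)⟩

theorem BaireClassOne.sub {f g : X → ℝ} (hf : BaireClassOne f) (hg : BaireClassOne g) :
    BaireClassOne (f - g) :=
  let ⟨F, hF, hFf⟩ := hf
  let ⟨G, hG, hGg⟩ := hg
  ⟨fun n => F n - G n, fun n => (hF n).sub (hG n), fun x => (hFf x).sub (hGg x)⟩

theorem BaireClassOne.exists_abs_le {f : X → ℝ} (hf : BaireClassOne f) {B : ℝ}
    (hB : ∀ x, |f x| ≤ B) :
    ∃ g : ℕ → X → ℝ, (∀ n, Continuous (g n)) ∧ (∀ n x, |g n x| ≤ B) ∧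
      ∀ x, Tendsto (fun n => g n x) atTop (𝓝 (f x)) := by
  obtain ⟨g, hg, hgf⟩ := hf
  have hclamp : Continuous fun t : ℝ => max (-B) (min B t) := by fun_prop
  refine ⟨fun n x => max (-B) (min B (g n x)), fun n => hclamp.comp (hg n),
    fun n x => abs_le.2 ⟨le_max_left _ _, max_le (by linarith [abs_nonneg (f x), hB x])
      (min_le_left _ _)⟩, fun x => ?_⟩
  have hfx : max (-B) (min B (f x)) = f x := by
    obtain ⟨h₁, h₂⟩ := abs_le.1 (hB x)
    rw [min_eq_right h₂, max_eq_right h₁]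
  have hlim := (hclamp.tendsto (f x)).comp (hgf x)
  rwa [hfx] at hlim

theorem baireClassOne_of_forall_exists_abs_sub_le {f : X → ℝ}
    (h : ∀ ε > 0, ∃ φ : X → ℝ, BaireClassOne φ ∧ ∀ x, |f x - φ x| ≤ ε) :
    BaireClassOne f := by
  choose φ hφ hφf using fun k : ℕ => h ((1 / 2) ^ k) (by positivity)
  set bound : ℕ → ℝ := fun k => 2 * (1 / 2) ^ k
  have hbound : Summable bound := summable_geometric_two.mul_left 2
  have hdiff : ∀ k x, |(φ (k + 1) - φ k) x| ≤ bound k := fun k x => by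
    have h₁ := hφf k x
    have h₂ := hφf (k + 1) x
    calc |(φ (k + 1) - φ k) x| = |(f x - φ k x) - (f x - φ (k + 1) x)| := by
          simp only [Pi.sub_apply]; ring_nf
      _ ≤ |f x - φ k x| + |f x - φ (k + 1) x| := abs_sub _ _
      _ ≤ bound k := by
          have : (0 : ℝ) ≤ (1 / 2) ^ k := by positivity
          simp only [bound, pow_succ] at h₂ ⊢; linarith
  -- `f = φ 0 + ∑ (φ (k + 1) - φ k)`; approximating the `k`-th term by continuous functions
  -- bounded by `bound k`, Tannery's theorem lets the limit pass through the series.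
  choose d hd hdb hdlim using fun k => ((hφ (k + 1)).sub (hφ k)).exists_abs_le (hdiff k)
  obtain ⟨η, hη, hηlim⟩ := hφ 0
  refine ⟨fun m x => η m x + ∑ k ∈ Finset.range m, d k m x, fun m =>
    (hη m).add (continuous_finsetSum _ fun k _ => hd k m), fun x => ?_⟩
  have hφlim : Tendsto (fun m => φ m x) atTop (𝓝 (f x)) := by
    refine tendsto_iff_norm_sub_tendsto_zero.2 (squeeze_zero (fun _ => norm_nonneg _)
      (fun m => ?_) (tendsto_pow_atTop_nhds_zero_of_lt_one (r := (1 / 2 : ℝ)) (by norm_num)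
        (by norm_num)))
    rw [Real.norm_eq_abs, abs_sub_comm]
    exact hφf m x
  have htele : ∀ m, ∑ k ∈ Finset.range m, (φ (k + 1) - φ k) x = φ m x - φ 0 x := fun m =>
    Finset.sum_range_sub (fun k => φ k x) m
  have hsum : ∑' k, (φ (k + 1) - φ k) x = f x - φ 0 x := by
    have hs : Summable fun k => (φ (k + 1) - φ k) x :=
      hbound.of_norm_bounded fun k => hdiff k x
    refine tendsto_nhds_unique hs.tendsto_sum_tsum_nat ?_
    simpa only [htele] using hφlim.sub_const (φ 0 x)
  have htannery : Tendsto (fun m => ∑' k, if k < m then d k m x else 0) atTop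
      (𝓝 (∑' k, (φ (k + 1) - φ k) x)) := by
    refine tendsto_tsum_of_dominated_convergence hbound (fun k => ?_)
      (Eventually.of_forall fun m k => ?_)
    · refine (hdlim k x).congr' ?_
      filter_upwards [eventually_gt_atTop k] with m hm
      rw [if_pos hm]
    · split_ifs
      · exact hdb k m x
      · simp [bound]
  have hfin : ∀ m, ∑' k, (if k < m then d k m x else 0) = ∑ k ∈ Finset.range m, d k m x :=
    fun m => by
      rw [tsum_eq_sum (s := Finset.range m) fun k hk => by simp_all]
      exact Finset.sum_congr rfl fun k hk => if_pos (Finset.mem_range.1 hk)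
  simpa only [hsum, hfin, add_sub_cancel] using (hηlim x).add htannery

theorem baireClassOne_of_continuousOn [NormalSpace X] {f : X → ℝ} (K : ℕ → Set X)
    (hK : ∀ m, IsClosed (K m)) (hf : ∀ m, ContinuousOn f (K m))
    (hmem : ∀ x, ∀ᶠ m in atTop, x ∈ K m) : BaireClassOne f := by
  choose g hg using fun m => ContinuousMap.exists_restrict_eq (hK m) ⟨_, (hf m).domRestrict⟩
  refine ⟨fun m => g m, fun m => (g m).continuous, fun x => tendsto_const_nhds.congr' ?_⟩
  filter_upwards [hmem x] with m hm
  exact (congr($(hg m) ⟨x, hm⟩)).symm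

end BaireClassOne

theorem exists_baireClassOne_forall_exists_mem_eq {X : Type*} [MetricSpace X] (F : ℕ → Set X)
    (hF : ∀ n, IsClosed (F n)) (hcover : ∀ x, ∃ n, x ∈ F n) (c : ℕ → ℝ) :
    ∃ φ : X → ℝ, BaireClassOne φ ∧ ∀ x, ∃ n, x ∈ F n ∧ φ x = c n := by
  classical
  set idx : X → ℕ := fun x => Nat.find (hcover x)
  set G : ℕ → Set X := fun n => ⋃ j ∈ Finset.range n, F j
  have hG : ∀ n, IsClosed (G n) := fun n => isClosed_biUnion_finset fun j _ => hF j
  set E : ℕ → ℕ → Set X := fun n m => F n \ thickening (1 / (m + 1)) (G n)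
  have hidx : ∀ {n m x}, x ∈ E n m → idx x = n := by
    rintro n m x ⟨hxF, hxG⟩
    refine le_antisymm (Nat.find_min' _ hxF) (not_lt.1 fun hlt => hxG ?_)
    refine self_subset_thickening (by positivity) _ (mem_biUnion (Finset.mem_range.2 hlt) ?_)
    exact Nat.find_spec (hcover x)
  refine ⟨fun x => c (idx x), ?_, fun x => ⟨idx x, Nat.find_spec (hcover x), rfl⟩⟩
  refine baireClassOne_of_continuousOn (fun m => ⋃ n : Fin (m + 1), E n m)
    (fun m => isClosed_iUnion_of_finite fun n => (hF n).sdiff isOpen_thickening)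
    (fun m => (locallyFinite_of_finite _).continuousOn_iUnion
      (fun n => (hF n).sdiff isOpen_thickening)
      fun n => continuousOn_const.congr fun x hx => by rw [hidx hx]) fun x => ?_
  set n := idx x
  have hxG : x ∉ G n := by
    simp only [G, mem_iUnion, Finset.mem_range, not_exists]
    exact fun j hj => Nat.find_min (hcover x) hj
  obtain ⟨δ, hδ, hxδ⟩ : ∃ δ > 0, x ∉ thickening δ (G n) := by
    rw [← (hG n).closure_eq, closure_eq_iInter_thickening] at hxG
    simpa using hxG
  filter_upwards [eventually_ge_atTop n,
    tendsto_one_div_add_atTop_nhds_zero_nat.eventually (gt_mem_nhds hδ)] with m hnm hm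
  exact mem_iUnion.2 ⟨⟨n, Nat.lt_succ_of_le hnm⟩,
    Nat.find_spec (hcover x), fun h => hxδ (thickening_mono hm.le _ h)⟩

theorem QuasiContinuous.inter_preimage_nonempty {X Y : Type*} [TopologicalSpace X]
    [TopologicalSpace Y] {f : X → Y} (hf : QuasiContinuous f) {V D : Set X} (hV : IsOpen V)
    (hVD : V ⊆ closure D) {z : X} (hz : z ∈ V) {W : Set Y} (hW : W ∈ 𝓝 (f z)) :
    (D ∩ f ⁻¹' W).Nonempty := by
  obtain ⟨U, hU, ⟨p, hp⟩, hUV, hUW⟩ := hf z V (hV.mem_nhds hz) W hW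
  obtain ⟨y, hyU, hyD⟩ := mem_closure_iff.1 (hVD (hUV hp)) U hU hp
  exact ⟨y, hyD, hUW (mem_image_of_mem f hyU)⟩

theorem LinearlyContinuous.comp_add_linearMap {V E Y : Type*} [AddCommGroup V] [Module ℝ V]
    [TopologicalSpace V] [AddCommGroup E] [Module ℝ E] [TopologicalSpace E] [TopologicalSpace Y]
    {f : E → Y} (hf : LinearlyContinuous f) (L : V →ₗ[ℝ] E) (b : E) :
    LinearlyContinuous fun y => f (b + L y) := by
  intro x v
  simpa only [map_add, map_smul, add_assoc] using hf (b + L x) (L v)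

theorem exists_interior_closure_setOf_forall_abs_sub_le_nonempty {N : Type*} [TopologicalSpace N]
    [BaireSpace N] [Nonempty N] (h : N → ℝ → ℝ) (hh : ∀ w, ContinuousAt (h w) 0) {ε : ℝ}
    (hε : 0 < ε) :
    ∃ δ > 0, (interior (closure {w | ∀ t ∈ Ioo 0 δ, |h w t - h w 0| ≤ ε})).Nonempty := by
  have hcover : ⋃ k : ℕ, closure {w | ∀ t ∈ Ioo 0 (1 / (k + 1 : ℝ)), |h w t - h w 0| ≤ ε}
      = univ := by
    refine eq_univ_of_forall fun w => mem_iUnion.2 ?_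
    obtain ⟨δ, hδ, hwδ⟩ := Metric.eventually_nhds_iff.1 (Metric.tendsto_nhds.1 (hh w) ε hε)
    obtain ⟨k, hk⟩ := exists_nat_one_div_lt hδ
    refine ⟨k, subset_closure fun t ht => (hwδ ?_).le⟩
    rw [Real.dist_eq, sub_zero, abs_of_pos ht.1]
    exact ht.2.trans hk
  obtain ⟨k, hk⟩ := nonempty_interior_of_iUnion_of_closed (fun _ => isClosed_closure) hcover
  exact ⟨_, Nat.one_div_pos_of_nat, hk⟩

section NormedSpace

variable {E : Type*} [NormedAddCommGroup E] [NormedSpace ℝ E]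

def openCone (a u : E) (ρ r : ℝ) : Set E :=
  ⋃ s ∈ Ioo (0 : ℝ) r, ball (a + s • u) (s * ρ)

theorem isOpen_openCone (a u : E) (ρ r : ℝ) : IsOpen (openCone a u ρ r) :=
  isOpen_biUnion fun _ _ => isOpen_ball

theorem mem_openCone {a u x : E} {ρ r : ℝ} :
    x ∈ openCone a u ρ r ↔ ∃ s ∈ Ioo 0 r, ∃ y ∈ ball u ρ, x = a + s • y := by
  simp only [openCone, mem_iUnion₂, exists_prop]
  refine exists_congr fun s => and_congr_right fun hs => ⟨fun hx => ⟨s⁻¹ • (x - a), ?_, ?_⟩, ?_⟩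
  · have hxu : s⁻¹ • (x - a) - u = s⁻¹ • (x - (a + s • u)) := by
      match_scalars <;> field_simp [hs.1.ne']
    rw [mem_ball, dist_eq_norm, hxu, norm_smul, Real.norm_eq_abs, abs_of_pos (inv_pos.2 hs.1),
      inv_mul_lt_iff₀ hs.1, ← dist_eq_norm]
    exact hx
  · rw [smul_inv_smul₀ hs.1.ne', add_sub_cancel]
  · rintro ⟨y, hy, rfl⟩
    rw [mem_ball, dist_add_left, dist_smul₀, Real.norm_eq_abs, abs_of_pos hs.1]
    exact mul_lt_mul_of_pos_left hy hs.1

theorem openCone_mono {a u u' : E} {ρ ρ' r r' : ℝ} (hu : dist u' u + ρ' ≤ ρ) (hr : r' ≤ r) :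
    openCone a u' ρ' r' ⊆ openCone a u ρ r := by
  intro x hx
  obtain ⟨s, hs, y, hy, rfl⟩ := mem_openCone.1 hx
  refine mem_openCone.2 ⟨s, ⟨hs.1, hs.2.trans_le hr⟩, y, ?_, rfl⟩
  rw [mem_ball] at hy ⊢
  linarith [dist_triangle y u' u]

theorem mem_closure_openCone (a u : E) {ρ r : ℝ} (hρ : 0 < ρ) (hr : 0 < r) :
    a ∈ closure (openCone a u ρ r) := by
  have hcont : Continuous fun s : ℝ => a + s • u := by fun_prop
  have hlim : Tendsto (fun s : ℝ => a + s • u) (𝓝[>] 0) (𝓝 a) :=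
    (hcont.tendsto' 0 a (by simp)).mono_left nhdsWithin_le_nhds
  refine mem_closure_of_tendsto hlim ?_
  filter_upwards [Ioo_mem_nhdsGT hr] with s hs
  exact mem_openCone.2 ⟨s, hs, u, mem_ball_self hρ, rfl⟩

/-- A weak form of `ConicallyQuasiContinuous`: the cone is not required to lie in a prescribed
conical neighbourhood of its apex. -/
def ConeQuasiContinuous (f : E → ℝ) : Prop :=
  ∀ a, ∀ ε > 0, ∃ u ρ r, 0 < ρ ∧ 0 < r ∧ ∀ x ∈ openCone a u ρ r, |f x - f a| ≤ ε

theorem ConeQuasiContinuous.quasiContinuous {f : E → ℝ} (hf : ConeQuasiContinuous f) :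
    QuasiContinuous f := by
  intro x V hV W hW
  obtain ⟨ε, hε, hεW⟩ := Metric.mem_nhds_iff.1 hW
  obtain ⟨u, ρ, r, hρ, hr, hcone⟩ := hf x (ε / 2) (half_pos hε)
  obtain ⟨y, hyV, hyC⟩ := mem_closure_iff.1 (mem_closure_openCone x u hρ hr) _ isOpen_interior
    (mem_interior_iff_mem_nhds.2 hV)
  refine ⟨interior V ∩ openCone x u ρ r, isOpen_interior.inter (isOpen_openCone _ _ _ _),
    ⟨y, hyV, hyC⟩, inter_subset_left.trans interior_subset, ?_⟩
  rintro _ ⟨z, hz, rfl⟩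
  refine hεW (mem_ball.2 ?_)
  rw [Real.dist_eq]
  linarith [hcone z hz.2]

/-- For `w` in `U` and a nearby direction `w'` that is good in the sense of the Baire category
theorem, `f (a + s • (u + w))` and `f (a + s • (u + w'))` are compared through quasi-continuity of
the slice `y ↦ f (a + s • u + y)` of `f` on `N`. -/
theorem exists_forall_mem_Ioo_forall_mem_abs_sub_le (N : Submodule ℝ E) [BaireSpace N]
    (hN : ∀ g : N → ℝ, LinearlyContinuous g → QuasiContinuous g) {f : E → ℝ}
    (hf : LinearlyContinuous f) (a u : E) {ε : ℝ} (hε : 0 < ε) :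
    ∃ δ > (0 : ℝ), ∃ U : Set N, IsOpen U ∧ U.Nonempty ∧
      ∀ s ∈ Ioo 0 δ, ∀ w ∈ U, |f (a + s • (u + w)) - f a| ≤ ε := by
  obtain ⟨δ, hδ, hU⟩ := exists_interior_closure_setOf_forall_abs_sub_le_nonempty
    (fun (w : N) t => f (a + t • (u + w))) (fun w => (hf a _).continuousAt) (half_pos hε)
  refine ⟨δ, hδ, _, isOpen_interior, hU, fun s hs w hw => ?_⟩
  set D := {w : N | ∀ t ∈ Ioo 0 δ, |f (a + t • (u + w)) - f (a + (0 : ℝ) • (u + w))| ≤ ε / 2}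
  have hs0 : s ≠ 0 := hs.1.ne'
  set g : N → ℝ := fun y => f (a + s • u + N.subtype y)
  have hg : ∀ w : N, g (s • w) = f (a + s • (u + w)) := fun w => by
    simp only [g, Submodule.subtype_apply, Submodule.coe_smul, smul_add, add_assoc]
  have hVD : s • interior (closure D) ⊆ closure (s • D) := by
    rw [closure_smul₀]
    exact smul_set_mono interior_subset
  obtain ⟨_, ⟨w', hw'D, rfl⟩, hw'⟩ := (hN g (hf.comp_add_linearMap _ _)).inter_preimage_nonempty
    ((isOpen_interior).smul₀ hs0) hVD (smul_mem_smul_set hw) (ball_mem_nhds _ (half_pos hε))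
  have h₁ := hw'D s hs
  rw [zero_smul, add_zero] at h₁
  rw [mem_preimage, mem_ball, Real.dist_eq, hg, hg] at hw'
  calc |f (a + s • (u + w)) - f a|
      ≤ |f (a + s • (u + w)) - f (a + s • (u + w'))| + |f (a + s • (u + w')) - f a| :=
        abs_sub_le _ _ _
    _ ≤ ε / 2 + ε / 2 := by rw [abs_sub_comm] at hw'; exact add_le_add hw'.le h₁
    _ = ε := add_halves ε

theorem exists_openCone_subset (φ : E →L[ℝ] ℝ) {u w₀ : E} (hu : φ u = 1) (hw₀ : φ w₀ = 0)
    {ρ₀ δ : ℝ} (hρ₀ : 0 < ρ₀) (hδ : 0 < δ) (a : E) :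
    ∃ v ρ r, 0 < ρ ∧ 0 < r ∧ ∀ x ∈ openCone a v ρ r,
      ∃ s ∈ Ioo 0 δ, ∃ w, φ w = 0 ∧ dist w w₀ < ρ₀ ∧ x = a + s • (u + w) := by
  have hv : φ (u + w₀) = 1 := by rw [map_add, hu, hw₀, add_zero]
  -- `y ↦ (φ y)⁻¹ • y - u` projects the direction `y` to the hyperplane along `u`
  have hproj : ContinuousAt (fun y => (φ y)⁻¹ • y - u) (u + w₀) :=
    ((φ.continuous.continuousAt.inv₀ (by rw [hv]; exact one_ne_zero)).smul continuousAt_id).sub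
      continuousAt_const
  have hproj_v : (φ (u + w₀))⁻¹ • (u + w₀) - u = w₀ := by
    rw [hv, inv_one, one_smul, add_sub_cancel_left]
  have hev : ∀ᶠ y in 𝓝 (u + w₀), φ y ∈ Ioo 0 2 ∧ (φ y)⁻¹ • y - u ∈ ball w₀ ρ₀ := by
    refine (φ.continuous.continuousAt.eventually_mem (Ioo_mem_nhds ?_ ?_)).and
      (hproj.eventually_mem (by rw [hproj_v]; exact ball_mem_nhds _ hρ₀)) <;> simp [hv]
  obtain ⟨ρ, hρ, hball⟩ := Metric.eventually_nhds_iff.1 hev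
  refine ⟨u + w₀, ρ, δ / 2, hρ, half_pos hδ, fun x hx => ?_⟩
  obtain ⟨s, hs, y, hy, rfl⟩ := mem_openCone.1 hx
  obtain ⟨⟨hφ₀, hφ₂⟩, hyw⟩ := hball hy
  refine ⟨s * φ y, ⟨mul_pos hs.1 hφ₀, by nlinarith [hs.2]⟩, (φ y)⁻¹ • y - u, ?_, hyw, ?_⟩
  · rw [map_sub, map_smul, hu, smul_eq_mul, inv_mul_cancel₀ hφ₀.ne', sub_self]
  · rw [add_sub_cancel, mul_smul, smul_inv_smul₀ hφ₀.ne']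

theorem LinearlyContinuous.coneQuasiContinuous [FiniteDimensional ℝ E] {f : E → ℝ}
    (hf : LinearlyContinuous f) : ConeQuasiContinuous f := by
  induction hn : Module.finrank ℝ E generalizing E with
  | zero =>
    have : Subsingleton E := Module.finrank_zero_iff.1 hn
    exact fun a ε hε => ⟨0, 1, 1, one_pos, one_pos, fun x _ => by
      simp [Subsingleton.elim x a, hε.le]⟩
  | succ n ih =>
    intro a ε hε
    have : Nontrivial E := Module.finrank_pos_iff (R := ℝ).1 (by omega)
    obtain ⟨u₀, hu₀⟩ := exists_ne (0 : E)
    obtain ⟨φ, hu⟩ := SeparatingDual.exists_eq_one (R := ℝ) hu₀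
    have hker : Module.finrank ℝ (LinearMap.ker (φ : E →ₗ[ℝ] ℝ)) = n := by
      have hrange : LinearMap.range (φ : E →ₗ[ℝ] ℝ) = ⊤ :=
        LinearMap.range_eq_top.2 fun c => ⟨c • u₀, by simp [hu]⟩
      have := LinearMap.finrank_range_add_finrank_ker (φ : E →ₗ[ℝ] ℝ)
      rw [hrange, finrank_top, Module.finrank_self, hn] at this
      omega
    obtain ⟨δ, hδ, U, hU, ⟨w₀, hw₀⟩, hslice⟩ :=
      exists_forall_mem_Ioo_forall_mem_abs_sub_le (LinearMap.ker (φ : E →ₗ[ℝ] ℝ))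
        (fun g hg => (ih hg hker).quasiContinuous) hf a u₀ hε
    obtain ⟨ρ₀, hρ₀, hball⟩ := Metric.isOpen_iff.1 hU w₀ hw₀
    obtain ⟨v, ρ, r, hρ, hr, hcone⟩ := exists_openCone_subset φ hu w₀.2 hρ₀ hδ a
    refine ⟨v, ρ, r, hρ, hr, fun x hx => ?_⟩
    obtain ⟨s, hs, w, hw, hdist, rfl⟩ := hcone x hx
    exact hslice s hs ⟨w, hw⟩ (hball hdist)

/-- For `x` in the closure, each `x + t • u` with `0 < t < r` lies in the cone of a nearby apex. -/
theorem LinearlyContinuous.closure_setOf_openCone_subset {Y : Type*} [TopologicalSpace Y]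
    {f : E → Y} (hf : LinearlyContinuous f) {C : Set Y} (hC : IsClosed C) (u : E) {ρ r : ℝ}
    (hρ : 0 < ρ) (hr : 0 < r) : closure {a | openCone a u ρ r ⊆ f ⁻¹' C} ⊆ f ⁻¹' C := by
  intro x hx
  have hlim : Tendsto (fun t : ℝ => f (x + t • u)) (𝓝[>] 0) (𝓝 (f x)) :=
    ((hf x u).tendsto' 0 (f x) (by simp)).mono_left nhdsWithin_le_nhds
  refine hC.mem_of_tendsto hlim ?_
  filter_upwards [Ioo_mem_nhdsGT hr] with t ht
  obtain ⟨a, ha, hxa⟩ := Metric.mem_closure_iff.1 hx (t * ρ) (mul_pos ht.1 hρ)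
  exact ha (mem_biUnion ht (by rwa [mem_ball, dist_add_right]))

theorem LinearlyContinuous.exists_closed_cover_abs_sub_le [SeparableSpace E] {f : E → ℝ}
    (hf : LinearlyContinuous f) (hcq : ConeQuasiContinuous f) {ε : ℝ} (hε : 0 < ε) :
    ∃ (F : ℕ → Set E) (c : ℕ → ℝ), (∀ n, IsClosed (F n)) ∧ (∀ x, ∃ n, x ∈ F n) ∧
      ∀ n, ∀ x ∈ F n, |f x - c n| ≤ ε := by
  set u := denseSeq E
  -- cells indexed by a centre `q`, a direction `u i`, an aperture `1 / (p + 1)` and a height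
  -- `1 / (j + 1)`
  set cell : ℚ × ℕ × ℕ × ℕ → Set E := fun m => closure {a | openCone a (u m.2.1)
    (1 / (m.2.2.1 + 1)) (1 / (m.2.2.2 + 1)) ⊆ f ⁻¹' closedBall (m.1 : ℝ) ε}
  have hcell : ∀ m, ∀ x ∈ cell m, |f x - m.1| ≤ ε := fun m x hx =>
    hf.closure_setOf_openCone_subset isClosed_closedBall _ Nat.one_div_pos_of_nat
      Nat.one_div_pos_of_nat hx
  have hcover : ∀ a, ∃ m, a ∈ cell m := by
    intro a
    obtain ⟨v, ρ, r, hρ, hr, hcone⟩ := hcq a (ε / 2) (half_pos hε)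
    obtain ⟨i, hi⟩ := (denseRange_denseSeq E).exists_dist_lt v (half_pos hρ)
    obtain ⟨p, hp⟩ := exists_nat_one_div_lt (half_pos hρ)
    obtain ⟨j, hj⟩ := exists_nat_one_div_lt hr
    obtain ⟨q, hq₁, hq₂⟩ := exists_rat_btwn (sub_lt_self (f a) (half_pos hε))
    refine ⟨(q, i, p, j), subset_closure fun x hx => ?_⟩
    have hx' := hcone x (openCone_mono (by rw [dist_comm]; linarith) hj.le hx)
    rw [abs_le] at hx'
    rw [mem_preimage, mem_closedBall, Real.dist_eq, abs_le]
    constructor <;> linarith [hx'.1, hx'.2]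
  obtain ⟨e, he⟩ := exists_surjective_nat (ℚ × ℕ × ℕ × ℕ)
  refine ⟨fun n => cell (e n), fun n => (e n).1, fun n => isClosed_closure, fun x => ?_,
    fun n => hcell (e n)⟩
  obtain ⟨m, hm⟩ := hcover x
  obtain ⟨n, rfl⟩ := he m
  exact ⟨n, hm⟩

theorem LinearlyContinuous.baireClassOne_of_finiteDimensional [FiniteDimensional ℝ E] {f : E → ℝ}
    (hf : LinearlyContinuous f) : BaireClassOne f := by
  refine baireClassOne_of_forall_exists_abs_sub_le fun ε hε => ?_
  obtain ⟨F, c, hF, hcover, hosc⟩ :=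
    hf.exists_closed_cover_abs_sub_le hf.coneQuasiContinuous hε
  obtain ⟨φ, hφ, hφc⟩ := exists_baireClassOne_forall_exists_mem_eq F hF hcover c
  refine ⟨φ, hφ, fun x => ?_⟩
  obtain ⟨n, hn, hφx⟩ := hφc x
  exact hφx ▸ hosc n x hn

end NormedSpace

/-- Every linearly continuous real-valued function on a finite-dimensional Hausdorff
topological vector space is of the first Baire class. -/
theorem stmt0 {X : Type*} [AddCommGroup X] [Module ℝ X] [TopologicalSpace X]
    [IsTopologicalAddGroup X] [ContinuousSMul ℝ X] [T2Space X] [FiniteDimensional ℝ X]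
    (f : X → ℝ) (hf : LinearlyContinuous f) :
    BaireClassOne f := by
  set e := (Module.finBasis ℝ X).equivFun
  have hfe := hf.comp_add_linearMap e.symm.toLinearMap 0
  have he : Continuous e := e.toLinearMap.continuous_of_finiteDimensional
  simpa [Function.comp_def] using hfe.baireClassOne_of_finiteDimensional.comp_continuous he
end

section
/- Every BP-measurable linearly continuous function f : X → Y from a Baire cosmic topological vector space X to a Tychonoff (completely regular Hausdorff) topological space Y is F_σ-measurable. -/
open Topology Filter Set TopologicalSpace

/-!
Composing with a continuous `g : Y → ℝ` reduces the theorem to a function `h` into a second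
countable regular space. BP-measurability makes `h` continuous on a comeagre set `D`. Linear
continuity replaces continuity by a Baire category argument along rays: for a meagre set `s`, the
directions `v` with `z + a • v ∈ s` for some rational `a > 0` form a meagre set, so a set containing
an initial segment of every ray from `y` is not meagre near `y`. Hence `D`-values approximate `h y`
near `y`, and for closed `W` we get `interior (closure (h ⁻¹' W)) ⊆ h ⁻¹' W`.

If `W` is a neighbourhood of `h x`, all short segments from `x` lie in `h ⁻¹' W`, and by Baire
category the directions whose segments of length `1 / (m + 1)` lie in `closure (h ⁻¹' W)` contain a
non-meagre member `N` of a countable network. Conversely, if all such segments from `z` in the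
directions of a non-meagre `N` lie in `closure (h ⁻¹' W)` then `h z ∈ W`: otherwise their initial
parts would lie in the nowhere dense frontier of `closure (h ⁻¹' W)`. So the preimage of an open
set is a countable union of the closed sets of such points `z`.
-/

section BaireCategory

variable {X Y : Type*} [TopologicalSpace X]

lemma isFSigma_iUnion {ι : Type*} [Countable ι] {F : ι → Set X} (hF : ∀ i, IsClosed (F i)) :
    IsFSigma (⋃ i, F i) := by
  cases isEmpty_or_nonempty ι with
  | inl _ => exact ⟨fun _ => ∅, fun _ => isClosed_empty, by simp⟩
  | inr _ =>
    obtain ⟨e, he⟩ := exists_surjective_nat ι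
    exact ⟨fun n => F (e n), fun n => hF (e n), (he.iUnion_comp F).symm⟩

lemma exists_isMeagre_compl_continuousOn [TopologicalSpace Y] [SecondCountableTopology Y]
    {h : X → Y} (hBP : ∀ U, IsOpen U → HasBaireProperty (h ⁻¹' U)) :
    ∃ D : Set X, IsMeagre Dᶜ ∧ ContinuousOn h D := by
  have : Countable (countableBasis Y) := (countable_countableBasis Y).to_subtype
  choose O hO hOU using fun U : countableBasis Y => hBP U ((isBasis_countableBasis Y).isOpen U.2)
  refine ⟨(⋃ U, symmDiff (O U) (h ⁻¹' U))ᶜ, by simpa using isMeagre_iUnion hOU, ?_⟩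
  intro d hd
  have hmem : ∀ x ∈ (⋃ U, symmDiff (O U) (h ⁻¹' U))ᶜ, ∀ U, x ∈ O U ↔ h x ∈ (U : Set Y) := by
    intro x hx U
    have := notMem_of_mem_compl hx
    simp only [mem_iUnion, Set.mem_symmDiff, mem_preimage, not_exists] at this
    have := this U
    tauto
  refine ((isBasis_countableBasis Y).nhds_hasBasis.tendsto_right_iff).2 fun U ⟨hUB, hdU⟩ => ?_
  exact mem_nhdsWithin.2 ⟨O ⟨U, hUB⟩, hO _, (hmem d hd ⟨U, hUB⟩).2 hdU,
    fun x ⟨hxO, hxD⟩ => (hmem x hxD ⟨U, hUB⟩).1 hxO⟩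

def IsNetwork (𝒩 : Set (Set X)) : Prop :=
  ∀ U, IsOpen U → ∀ x ∈ U, ∃ N ∈ 𝒩, x ∈ N ∧ N ⊆ U

lemma CosmicSpace.exists_countable_isNetwork (hX : CosmicSpace X) :
    ∃ 𝒩 : Set (Set X), 𝒩.Countable ∧ IsNetwork 𝒩 := by
  obtain ⟨M, _, _, _, g, hg, hgsurj⟩ := hX
  let _ := TopologicalSpace.metrizableSpaceMetric M
  have _ := UniformSpace.secondCountable_of_separable M
  refine ⟨image g '' countableBasis M, (countable_countableBasis M).image _, ?_⟩
  intro U hU x hxU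
  obtain ⟨m, rfl⟩ := hgsurj x
  obtain ⟨s, hs, hms, hsU⟩ :=
    (isBasis_countableBasis M).exists_subset_of_mem_open hxU (hU.preimage hg)
  exact ⟨g '' s, mem_image_of_mem _ hs, mem_image_of_mem g hms, image_subset_iff.2 hsU⟩

lemma IsNetwork.exists_subset_not_isMeagre {𝒩 : Set (Set X)} (hc : 𝒩.Countable)
    (h𝒩 : IsNetwork 𝒩) {U : Set X} (hU : IsOpen U) (hUm : ¬IsMeagre U) :
    ∃ N ∈ 𝒩, N ⊆ U ∧ ¬IsMeagre N := by
  by_contra! hmeagre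
  refine hUm ((isMeagre_biUnion (hc.mono (sep_subset 𝒩 (· ⊆ U))) fun N hN =>
    hmeagre N hN.1 hN.2).mono fun x hx => ?_)
  obtain ⟨N, hN, hxN, hNU⟩ := h𝒩 U hU x hx
  exact mem_biUnion ⟨hN, hNU⟩ hxN

lemma IsOpen.exists_countable_isClosed_nhds_cover [TopologicalSpace Y] [RegularSpace Y]
    [SecondCountableTopology Y] {V : Set Y} (hV : IsOpen V) :
    ∃ 𝒲 : Set (Set Y), 𝒲.Countable ∧ (∀ W ∈ 𝒲, IsClosed W ∧ W ⊆ V) ∧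
      ∀ y ∈ V, ∃ W ∈ 𝒲, W ∈ 𝓝 y := by
  refine ⟨closure '' {s ∈ countableBasis Y | closure s ⊆ V},
    ((countable_countableBasis Y).mono (sep_subset _ _)).image _, ?_, fun y hy => ?_⟩
  · rintro - ⟨s, ⟨-, hsV⟩, rfl⟩
    exact ⟨isClosed_closure, hsV⟩
  obtain ⟨t, ht, htc, htV⟩ := exists_mem_nhds_isClosed_subset (hV.mem_nhds hy)
  obtain ⟨s, hs, hys, hst⟩ := (isBasis_countableBasis Y).mem_nhds_iff.1 ht
  exact ⟨closure s, mem_image_of_mem _ ⟨hs, (closure_minimal hst htc).trans htV⟩,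
    mem_of_superset (((isBasis_countableBasis Y).isOpen hs).mem_nhds hys) subset_closure⟩

end BaireCategory

lemma exists_pos_rat_of_eventually_nhdsGT {P : ℝ → Prop} (h : ∀ᶠ t in 𝓝[>] 0, P t) :
    ∃ a : ℚ, 0 < a ∧ P a := by
  obtain ⟨ε, hε, hsub⟩ := mem_nhdsGT_iff_exists_Ioo_subset.1 h
  obtain ⟨a, ha0, haε⟩ := exists_rat_btwn (mem_Ioi.1 hε)
  exact ⟨a, by exact_mod_cast ha0, hsub ⟨ha0, haε⟩⟩

section Rays

variable {X Y : Type*} [TopologicalSpace X] [AddCommGroup X] [Module ℝ X]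

def RaysInto (L N : Set X) (δ : ℝ) : Set X :=
  {z | ∀ v ∈ N, ∀ t ∈ Ioc 0 δ, z + t • v ∈ L}

lemma IsClosed.raysInto [ContinuousAdd X] {L : Set X} (hL : IsClosed L) (N : Set X) (δ : ℝ) :
    IsClosed (RaysInto L N δ) := by
  simp only [RaysInto, ofPred_forall]
  exact isClosed_biInter fun v _ => isClosed_biInter fun t _ => hL.preimage (by fun_prop)

lemma LinearlyContinuous.tendsto_smul [TopologicalSpace Y] {h : X → Y}
    (hlin : LinearlyContinuous h) (x v : X) :
    Tendsto (fun t : ℝ => h (x + t • v)) (𝓝 0) (𝓝 (h x)) := by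
  simpa using (hlin x v).tendsto 0

variable [IsTopologicalAddGroup X] [ContinuousSMul ℝ X]

lemma isMeagre_setOf_exists_rat_smul_mem {s : Set X} (hs : IsMeagre s) (z : X) :
    IsMeagre {v | ∃ a : ℚ, 0 < a ∧ z + (a : ℝ) • v ∈ s} := by
  have hray : ∀ a : ℚ, 0 < a → IsMeagre ((fun v : X => z + (a : ℝ) • v) ⁻¹' s) := fun a ha =>
    let e := (Homeomorph.smulOfNeZero (a : ℝ) (by positivity)).trans (Homeomorph.addLeft z)
    hs.preimage_of_isOpenMap e.continuous e.isOpenMap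
  refine (isMeagre_iUnion fun a => isMeagre_iUnion fun ha => hray a ha).mono ?_
  rintro v ⟨a, ha, hv⟩
  exact mem_iUnion₂.2 ⟨a, ha, hv⟩

lemma isMeagre_of_eventually_smul_mem {s O : Set X} (hs : IsMeagre s) (z : X)
    (hO : ∀ v ∈ O, ∀ᶠ t in 𝓝[>] (0 : ℝ), z + t • v ∈ s) : IsMeagre O :=
  (isMeagre_setOf_exists_rat_smul_mem hs z).mono fun v hv =>
    exists_pos_rat_of_eventually_nhdsGT (hO v hv)

variable [BaireSpace X] [TopologicalSpace Y] {h : X → Y} {D : Set X}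

lemma LinearlyContinuous.exists_mem_inter_of_isMeagre_compl (hlin : LinearlyContinuous h)
    (hD : IsMeagre Dᶜ) {B : Set X} (hB : IsOpen B) {y : X} (hy : y ∈ B) {U : Set Y}
    (hU : U ∈ 𝓝 (h y)) : ∃ d ∈ D ∩ B, h d ∈ U := by
  by_contra! hno
  refine not_isMeagre_of_isOpen isOpen_univ univ_nonempty
    (isMeagre_of_eventually_smul_mem (s := B ∩ h ⁻¹' U)
      (hD.mono fun x hx hxD => hno x ⟨hxD, hx.1⟩ hx.2) y fun v _ => nhdsWithin_le_nhds ?_)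
  have hseg : Continuous fun t : ℝ => y + t • v := by fun_prop
  have hsegB : ∀ᶠ t in 𝓝 (0 : ℝ), y + t • v ∈ B :=
    (hseg.tendsto 0).eventually_mem (by simpa using hB.mem_nhds hy)
  exact hsegB.and ((hlin.tendsto_smul y v).eventually_mem hU)

lemma LinearlyContinuous.interior_closure_preimage_subset [RegularSpace Y]
    (hlin : LinearlyContinuous h) (hD : IsMeagre Dᶜ) (hDc : ContinuousOn h D) {W : Set Y}
    (hW : IsClosed W) : interior (closure (h ⁻¹' W)) ⊆ h ⁻¹' W := by
  intro y hy
  by_contra hyW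
  obtain ⟨C, hC, hCc, hCW⟩ := exists_mem_nhds_isClosed_subset (hW.isOpen_compl.mem_nhds hyW)
  obtain ⟨d, ⟨hdD, hdB⟩, hdC⟩ := hlin.exists_mem_inter_of_isMeagre_compl hD isOpen_interior hy
    (interior_mem_nhds.2 hC)
  -- near `d`, the `D`-values lie in `C`, yet `D`-values near points of `h ⁻¹' W` avoid `C`
  obtain ⟨B', hB', hdB', hB'C⟩ :=
    mem_nhdsWithin.1 (hDc d hdD (isOpen_interior.mem_nhds hdC))
  obtain ⟨z, ⟨hzB, hzB'⟩, hzW⟩ :=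
    mem_closure_iff.1 (interior_subset hdB) _ (isOpen_interior.inter hB') ⟨hdB, hdB'⟩
  obtain ⟨e, ⟨heD, -, heB'⟩, heC⟩ := hlin.exists_mem_inter_of_isMeagre_compl hD
    (isOpen_interior.inter hB') ⟨hzB, hzB'⟩ (hCc.isOpen_compl.mem_nhds fun hzC => hCW hzC hzW)
  exact heC (interior_subset (hB'C ⟨heB', heD⟩))

lemma LinearlyContinuous.raysInto_closure_preimage_subset [RegularSpace Y]
    (hlin : LinearlyContinuous h) (hD : IsMeagre Dᶜ) (hDc : ContinuousOn h D) {W : Set Y}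
    (hW : IsClosed W) {N : Set X} (hN : ¬IsMeagre N) {δ : ℝ} (hδ : 0 < δ) :
    RaysInto (closure (h ⁻¹' W)) N δ ⊆ h ⁻¹' W := by
  intro z hz
  by_contra hzW
  have hfr : IsMeagre (frontier (closure (h ⁻¹' W))) :=
    (isClosed_frontier.isNowhereDense_iff.2 (interior_frontier isClosed_closure)).isMeagre
  refine hN (isMeagre_of_eventually_smul_mem hfr z fun v hv => ?_)
  filter_upwards [Ioc_mem_nhdsGT hδ,
    nhdsWithin_le_nhds ((hlin.tendsto_smul z v).eventually_mem (hW.isOpen_compl.mem_nhds hzW))]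
    with t ht htW
  rw [isClosed_closure.frontier_eq]
  exact ⟨hz v hv t ht, fun hint => htW (hlin.interior_closure_preimage_subset hD hDc hW hint)⟩

lemma LinearlyContinuous.exists_mem_raysInto (hlin : LinearlyContinuous h)
    {𝒩 : Set (Set X)} (hc : 𝒩.Countable) (h𝒩 : IsNetwork 𝒩) {W : Set Y} {x : X}
    (hW : W ∈ 𝓝 (h x)) :
    ∃ m : ℕ, ∃ N ∈ 𝒩, ¬IsMeagre N ∧ x ∈ RaysInto (closure (h ⁻¹' W)) N (1 / (m + 1)) := by
  set C : ℕ → Set X := fun m => {v | ∀ t ∈ Ioc (0 : ℝ) (1 / (m + 1)),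
    x + t • v ∈ closure (h ⁻¹' W)}
  have hCc : ∀ m, IsClosed (C m) := fun m => by
    simp only [C, ofPred_forall]
    exact isClosed_biInter fun t _ => isClosed_closure.preimage (by fun_prop)
  have hcover : (⋃ m, C m) = univ := by
    refine eq_univ_of_forall fun v => ?_
    obtain ⟨ε, hε, hball⟩ := Metric.eventually_nhds_iff.1
      ((hlin.tendsto_smul x v).eventually_mem hW)
    obtain ⟨m, hm⟩ := exists_nat_one_div_lt hε
    refine mem_iUnion.2 ⟨m, fun t ht => subset_closure (hball ?_)⟩
    rw [Real.dist_eq, sub_zero, abs_of_pos ht.1]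
    exact ht.2.trans_lt hm
  obtain ⟨m, hm⟩ := nonempty_interior_of_iUnion_of_closed hCc hcover
  obtain ⟨N, hN, hNC, hNm⟩ := h𝒩.exists_subset_not_isMeagre hc isOpen_interior
    (not_isMeagre_of_isOpen isOpen_interior hm)
  exact ⟨m, N, hN, hNm, fun v hv => interior_subset (hNC hv)⟩

theorem LinearlyContinuous.isFSigma_preimage [RegularSpace Y] [SecondCountableTopology Y]
    (hX : CosmicSpace X) (hlin : LinearlyContinuous h)
    (hBP : ∀ U, IsOpen U → HasBaireProperty (h ⁻¹' U)) {V : Set Y} (hV : IsOpen V) :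
    IsFSigma (h ⁻¹' V) := by
  obtain ⟨D, hD, hDc⟩ := exists_isMeagre_compl_continuousOn hBP
  obtain ⟨𝒩, h𝒩c, h𝒩⟩ := hX.exists_countable_isNetwork
  obtain ⟨𝒲, h𝒲c, h𝒲V, h𝒲⟩ := hV.exists_countable_isClosed_nhds_cover
  have := h𝒲c.to_subtype
  have := (h𝒩c.mono (sep_subset 𝒩 fun N => ¬IsMeagre N)).to_subtype
  have hpre : h ⁻¹' V = ⋃ i : 𝒲 × ℕ × {N ∈ 𝒩 | ¬IsMeagre N},
      RaysInto (closure (h ⁻¹' i.1)) i.2.2 (1 / (i.2.1 + 1)) := by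
    refine Subset.antisymm (fun x hx => ?_) (iUnion_subset ?_)
    · obtain ⟨W, hW, hWx⟩ := h𝒲 _ hx
      obtain ⟨m, N, hN, hNm, hxN⟩ := hlin.exists_mem_raysInto h𝒩c h𝒩 hWx
      exact mem_iUnion.2 ⟨(⟨W, hW⟩, m, ⟨N, hN, hNm⟩), hxN⟩
    · rintro ⟨⟨W, hW⟩, m, N, -, hN⟩
      exact (hlin.raysInto_closure_preimage_subset hD hDc (h𝒲V W hW).1 hN
          Nat.one_div_pos_of_nat).trans (preimage_mono (h𝒲V W hW).2)
  rw [hpre]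
  exact isFSigma_iUnion fun _ => isClosed_closure.raysInto _ _

end Rays

theorem stmt1_general {X Y : Type*} [AddCommGroup X] [Module ℝ X] [TopologicalSpace X]
    [IsTopologicalAddGroup X] [ContinuousSMul ℝ X] [BaireSpace X]
    (hX : CosmicSpace X)
    [TopologicalSpace Y]
    (f : X → Y) (hlin : LinearlyContinuous f) (hBP : BPMeasurable f) :
    FSigmaMeasurable f := by
  rintro - ⟨g, hg, V, hV, rfl⟩
  exact LinearlyContinuous.isFSigma_preimage (h := g ∘ f) hX (fun x v => hg.comp (hlin x v))
    (fun W hW => hBP _ ⟨g, hg, W, hW, rfl⟩) hV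

/-- Every BP-measurable linearly continuous function from a Baire cosmic topological vector
space to a Tychonoff space is `Fσ`-measurable. -/
theorem stmt1 {X Y : Type*} [AddCommGroup X] [Module ℝ X] [TopologicalSpace X]
    [IsTopologicalAddGroup X] [ContinuousSMul ℝ X] [T2Space X] [BaireSpace X]
    (hX : CosmicSpace X)
    [TopologicalSpace Y] [CompletelyRegularSpace Y] [T2Space Y]
    (f : X → Y) (hlin : LinearlyContinuous f) (hBP : BPMeasurable f) :
    FSigmaMeasurable f :=
  stmt1_general hX f hlin hBP
end

section
/- For any σ̄-ℓ-miserable set E in a metrizable topological vector space X, there exists a lower semicontinuous linearly continuous function f : X → [0, 1] such that the set D(f) of discontinuity points of f equals E. -/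
open Topology Filter Set TopologicalSpace

/-! For a single closed ℓ-miserable set `A` with witness `L`, pick a set `S ⊆ Lᶜ` whose closure
adds exactly `A` to it, and let `g = d(·, L) / (d(·, L) + d(·, S))`. It is continuous off `A`,
equals `1` on `S` (so it jumps at every point of `A`), and vanishes on `L`; since `L` is an
ℓ-neighbourhood of `A`, every line through a point of `A` stays in `L` near that point, so `g` is
linearly continuous. For `E = ⋃ Aₙ` the function is `∑ 2⁻ⁿ⁻¹ gₙ`: uniform convergence preserves
continuity off `E` and along lines, and lower semicontinuity of the other terms keeps each jump. -/

open Metric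

section Series

variable {X ι : Type*} {w : ι → ℝ} {g : ι → X → ℝ}

theorem norm_mul_le_of_mem_Icc {a b : ℝ} (ha : 0 ≤ a) (hb : b ∈ Icc (0 : ℝ) 1) : ‖a * b‖ ≤ a := by
  rw [Real.norm_of_nonneg (mul_nonneg ha hb.1)]
  exact mul_le_of_le_one_right ha hb.2

theorem summable_mul_of_mem_Icc (hw : Summable w) (hw0 : ∀ i, 0 ≤ w i)
    (hg : ∀ i x, g i x ∈ Icc 0 1) (x : X) : Summable fun i => w i * g i x :=
  hw.of_norm_bounded fun i => norm_mul_le_of_mem_Icc (hw0 i) (hg i x)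

theorem tsum_mul_mem_Icc (hw : Summable w) (hw0 : ∀ i, 0 ≤ w i)
    (hw1 : ∑' i, w i = 1) (hg : ∀ i x, g i x ∈ Icc 0 1) (x : X) : ∑' i, w i * g i x ∈ Icc 0 1 :=
  ⟨tsum_nonneg fun i => mul_nonneg (hw0 i) (hg i x).1,
    hw1 ▸ (summable_mul_of_mem_Icc hw hw0 hg x).tsum_le_tsum
      (fun i => mul_le_of_le_one_right (hw0 i) (hg i x).2) hw⟩

variable [TopologicalSpace X]

theorem lowerSemicontinuous_tsum_of_nonneg {f : ι → X → ℝ} (hf : ∀ i, LowerSemicontinuous (f i))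
    (hf0 : ∀ i x, 0 ≤ f i x) (hs : ∀ x, Summable fun i => f i x) :
    LowerSemicontinuous fun x => ∑' i, f i x := by
  intro x y hy
  obtain ⟨s, hys⟩ := ((hs x).hasSum.eventually (lt_mem_nhds hy)).exists
  filter_upwards [lowerSemicontinuous_sum (fun i _ => hf i) x y hys] with x' hx'
  exact hx'.trans_le ((hs x').sum_le_tsum s fun i _ => hf0 i x')

theorem continuousAt_tsum_of_norm_le {F : Type*} [NormedAddCommGroup F] [CompleteSpace F]
    {f : ι → X → F} {u : ι → ℝ} {x : X} (hf : ∀ i, ContinuousAt (f i) x) (hu : Summable u)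
    (hfu : ∀ i y, ‖f i y‖ ≤ u i) : ContinuousAt (fun y => ∑' i, f i y) x := by
  refine continuousAt_of_locally_uniform_approx_of_continuousAt fun V hV => ?_
  obtain ⟨s, hs⟩ := (tendstoUniformly_tsum hu hfu V hV).exists
  exact ⟨univ, univ_mem, _, tendsto_finsetSum _ fun i _ => hf i, fun y _ => hs y⟩

theorem lowerSemicontinuous_tsum_mul (hw : Summable w) (hw0 : ∀ i, 0 ≤ w i)
    (hg : ∀ i x, g i x ∈ Icc 0 1) (hlsc : ∀ i, LowerSemicontinuous (g i)) :
    LowerSemicontinuous fun x => ∑' i, w i * g i x :=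
  lowerSemicontinuous_tsum_of_nonneg
    (fun i => (continuous_const_mul (w i)).comp_lowerSemicontinuous (hlsc i)
      fun _ _ h => mul_le_mul_of_nonneg_left h (hw0 i))
    (fun i x => mul_nonneg (hw0 i) (hg i x).1) (summable_mul_of_mem_Icc hw hw0 hg)

theorem continuousAt_tsum_mul (hw : Summable w) (hw0 : ∀ i, 0 ≤ w i)
    (hg : ∀ i x, g i x ∈ Icc 0 1) {x : X} (hcont : ∀ i, ContinuousAt (g i) x) :
    ContinuousAt (fun y => ∑' i, w i * g i y) x :=
  continuousAt_tsum_of_norm_le (fun i => continuousAt_const.mul (hcont i)) hw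
    fun i y => norm_mul_le_of_mem_Icc (hw0 i) (hg i y)

theorem linearlyContinuous_tsum_mul [AddCommGroup X] [Module ℝ X] (hw : Summable w)
    (hw0 : ∀ i, 0 ≤ w i) (hg : ∀ i x, g i x ∈ Icc 0 1) (hlin : ∀ i, LinearlyContinuous (g i)) :
    LinearlyContinuous fun x => ∑' i, w i * g i x := fun x v =>
  continuous_tsum (fun i => continuous_const.mul (hlin i x v)) hw
    fun i _ => norm_mul_le_of_mem_Icc (hw0 i) (hg i _)

/-- A term that jumps from `0` to `1` near `x` cannot be compensated by the other terms, which are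
lower semicontinuous. -/
theorem not_continuousAt_tsum_mul (hw : Summable w) (hw0 : ∀ i, 0 ≤ w i)
    (hg : ∀ i x, g i x ∈ Icc 0 1) (hlsc : ∀ i, LowerSemicontinuous (g i)) {i : ι} (hwi : 0 < w i)
    {x : X} (hx0 : g i x = 0) (hx1 : x ∈ closure {y | g i y = 1}) :
    ¬ ContinuousAt (fun y => ∑' j, w j * g j y) x := by
  classical
  intro hcont
  set w' : ι → ℝ := fun j => if j = i then 0 else w j
  have hw'0 : ∀ j, 0 ≤ w' j := fun j => by by_cases h : j = i <;> simp [w', h, hw0]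
  have hw' : Summable w' := hw.of_nonneg_of_le hw'0 fun j => by
    by_cases h : j = i <;> simp [w', h, hw0]
  have hsplit : ∀ y, ∑' j, w j * g j y = w i * g i y + ∑' j, w' j * g j y := fun y => by
    simp only [w', ite_mul, zero_mul]
    exact (summable_mul_of_mem_Icc hw hw0 hg y).tsum_eq_add_tsum_ite i
  have hrest := lowerSemicontinuous_tsum_mul hw' hw'0 hg hlsc x
    (∑' j, w' j * g j x - w i / 2) (by linarith)
  have hnear := hcont.eventually (gt_mem_nhds (lt_add_of_pos_right _ (half_pos hwi)))
  obtain ⟨y, ⟨hy_rest, hy_near⟩, hy1⟩ :=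
    ((hrest.and hnear).and_frequently (mem_closure_iff_frequently.1 hx1)).exists
  have hy1 : g i y = 1 := hy1
  simp only [hsplit, hx0, hy1] at hy_near
  linarith

end Series

section Lines

variable {X : Type*} [AddCommGroup X] [Module ℝ X] {L A : Set X}

theorem IsLNbhd.subset (h : IsLNbhd L A) : A ⊆ L := fun a ha => by
  obtain ⟨ε, hε, hL⟩ := h a ha 0
  simpa using hL 0 le_rfl hε

theorem IsLNbhd.eventually_add_smul_mem (h : IsLNbhd L A) {a : X} (ha : a ∈ A) (v : X) :
    ∀ᶠ t in 𝓝 (0 : ℝ), a + t • v ∈ L := by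
  obtain ⟨ε₁, hε₁, h₁⟩ := h a ha v
  obtain ⟨ε₂, hε₂, h₂⟩ := h a ha (-v)
  filter_upwards [Ioo_mem_nhds (neg_lt_zero.2 hε₂) hε₁] with t ht
  rcases le_or_gt 0 t with ht0 | ht0
  · exact h₁ t ht0 ht.2
  · simpa using h₂ (-t) (by linarith) (by linarith [ht.1])

theorem IsLNbhd.linearlyContinuous [TopologicalSpace X] [ContinuousAdd X] [ContinuousSMul ℝ X]
    {Y : Type*} [TopologicalSpace Y] {g : X → Y} {c : Y} (hL : IsLNbhd L A)
    (hgL : ∀ x ∈ L, g x = c) (hg : ∀ x ∉ A, ContinuousAt g x) : LinearlyContinuous g := by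
  intro x v
  refine continuous_iff_continuousAt.2 fun t₀ => ?_
  by_cases hA : x + t₀ • v ∈ A
  · have hline : ∀ᶠ t in 𝓝 t₀, x + t • v ∈ L := by
      filter_upwards [(tendsto_sub_nhds_zero_iff.2 tendsto_id).eventually
        (hL.eventually_add_smul_mem hA v)] with t ht
      rwa [add_assoc, ← add_smul, add_sub_cancel] at ht
    rw [ContinuousAt, hgL _ (hL.subset hA)]
    exact tendsto_const_nhds.congr' (hline.mono fun t ht => (hgL _ ht).symm)
  · exact (hg _ hA).comp (f := fun t : ℝ => x + t • v) (by fun_prop)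

end Lines

theorem closure_subset_union_of_finite_inter {X : Type*} [TopologicalSpace X] [T1Space X]
    {S A : Set X} (h : ∀ x ∉ A, ∃ V ∈ 𝓝 x, (V ∩ S).Finite) : closure S ⊆ S ∪ A := by
  intro x hx
  by_contra hxSA
  rw [mem_union, not_or] at hxSA
  obtain ⟨V, hV, hfin⟩ := h x hxSA.2
  have hW : V ∩ (V ∩ S)ᶜ ∈ 𝓝 x :=
    inter_mem hV (hfin.isClosed.isOpen_compl.mem_nhds fun hxVS => hxSA.1 hxVS.2)
  obtain ⟨y, ⟨hyV, hyVS⟩, hyS⟩ := mem_closure_iff_nhds.1 hx _ hW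
  exact hyVS ⟨hyV, hyS⟩

section Nets

variable {X : Type*} [PseudoMetricSpace X]

theorem exists_separated_net (s : Set X) {ε : ℝ} (hε : 0 < ε) :
    ∃ N ⊆ s, N.Pairwise (fun x y => ε ≤ dist x y) ∧ ∀ x ∈ s, ∃ y ∈ N, dist x y < ε := by
  obtain ⟨N, hN⟩ := zorn_subset {N | N ⊆ s ∧ N.Pairwise fun x y => ε ≤ dist x y}
    fun c hc hchain => ⟨⋃₀ c, ⟨sUnion_subset fun t ht => (hc ht).1,
      (pairwise_sUnion hchain.directedOn).2 fun t ht => (hc ht).2⟩, fun t => subset_sUnion_of_mem⟩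
  refine ⟨N, hN.prop.1, hN.prop.2, fun x hx => ?_⟩
  by_contra! hfar
  have hxN : x ∉ N := fun h => (hfar x h).not_gt (by simpa using hε)
  refine hxN (hN.2 ⟨insert_subset hx hN.prop.1, hN.prop.2.insert fun y hy _ => ?_⟩
    (subset_insert x N) (mem_insert x N))
  exact ⟨hfar y hy, dist_comm x y ▸ hfar y hy⟩

theorem Set.Pairwise.subsingleton_ball_inter {N : Set X} {ε : ℝ}
    (hN : N.Pairwise fun x y => ε ≤ dist x y) (x : X) : (ball x (ε / 2) ∩ N).Subsingleton := by
  intro y ⟨hy, hyN⟩ y' ⟨hy', hy'N⟩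
  by_contra hne
  have := dist_triangle_right y y' x
  linarith [hN hyN hy'N hne, mem_ball.1 hy, mem_ball.1 hy']

end Nets

/-- `S` is built from `1/(k+1)`-nets of `U ∩ thickening (1/(k+1)) A`: near a point off `A` only
finitely many scales contribute, each with at most one point. -/
theorem IsClosed.exists_subset_closure_eq_union {X : Type*} [MetricSpace X] {A U : Set X}
    (hA : IsClosed A) (hAU : A ⊆ closure U) : ∃ S ⊆ U, closure S = S ∪ A := by
  set r : ℕ → ℝ := fun k => 1 / ((k : ℝ) + 1)
  have hr : ∀ k, 0 < r k := fun k => Nat.one_div_pos_of_nat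
  choose N hNsub hNsep hNnet using fun k => exists_separated_net (U ∩ thickening (r k) A) (hr k)
  refine ⟨⋃ k, N k, iUnion_subset fun k => (hNsub k).trans inter_subset_left,
    subset_antisymm (closure_subset_union_of_finite_inter fun x hx => ?_)
      (union_subset subset_closure fun a ha => ?_)⟩
  · obtain ⟨δ, hδ, hball⟩ := Metric.isOpen_iff.1 hA.isOpen_compl x hx
    obtain ⟨K, hK⟩ : ∃ K, r K < δ / 2 := exists_nat_one_div_lt (half_pos hδ)
    refine ⟨ball x (r K / 2), ball_mem_nhds x (half_pos (hr K)), ?_⟩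
    have hfin : (⋃ k ∈ Iio K, ball x (r K / 2) ∩ N k).Finite :=
      (finite_Iio K).biUnion fun k hk => (((hNsep k).subsingleton_ball_inter x).anti
        (inter_subset_inter_left _ (ball_subset_ball (div_le_div_of_nonneg_right
          (Nat.one_div_le_one_div (le_of_lt hk)) zero_le_two)))).finite
    refine hfin.subset ?_
    rintro y ⟨hy, hyN⟩
    obtain ⟨k, hyk⟩ := mem_iUnion.1 hyN
    refine mem_biUnion (x := k) ?_ ⟨hy, hyk⟩
    by_contra! hKk
    obtain ⟨a, ha, hya⟩ := mem_thickening_iff.1 (hNsub k hyk).2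
    have hxa : δ ≤ dist x a := not_lt.1 fun h => hball (mem_ball'.2 h) ha
    have := dist_triangle x y a
    have hrk : r k ≤ r K := Nat.one_div_le_one_div (not_lt.1 hKk)
    linarith [mem_ball'.1 hy, hr K]
  · rw [Metric.mem_closure_iff]
    intro ε hε
    obtain ⟨k, hk⟩ := exists_nat_one_div_lt (half_pos hε)
    obtain ⟨u, huU, hau⟩ := Metric.mem_closure_iff.1 (hAU ha) _ (hr k)
    obtain ⟨y, hyN, huy⟩ :=
      hNnet k u ⟨huU, mem_thickening_iff.2 ⟨a, ha, by rwa [dist_comm]⟩⟩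
    exact ⟨y, mem_iUnion.2 ⟨k, hyN⟩, by linarith [dist_triangle a u y]⟩

theorem lowerSemicontinuous_of_continuousAt_of_isMinOn {X : Type*} [TopologicalSpace X]
    {f : X → ℝ} {A : Set X} (hmin : ∀ x ∈ A, IsMinOn f univ x)
    (hcont : ∀ x ∉ A, ContinuousAt f x) : LowerSemicontinuous f := by
  intro x
  by_cases hx : x ∈ A
  · exact fun y hy => Eventually.of_forall fun z => hy.trans_le (hmin x hx (mem_univ z))
  · exact (hcont x hx).lowerSemicontinuousAt

theorem LMiserable.exists_linearlyContinuous_jump_function {X : Type*} [MetricSpace X]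
    [AddCommGroup X] [Module ℝ X] [ContinuousAdd X] [ContinuousSMul ℝ X] {A : Set X}
    (hm : LMiserable A) (hA : IsClosed A) :
    ∃ g : X → ℝ, (∀ x, g x ∈ Icc 0 1) ∧ (∀ x ∈ A, g x = 0) ∧ LowerSemicontinuous g ∧
      LinearlyContinuous g ∧ (∀ x ∉ A, ContinuousAt g x) ∧ A ⊆ closure {x | g x = 1} := by
  rcases A.eq_empty_or_nonempty with rfl | hAne
  · exact ⟨0, by simp, by simp, lowerSemicontinuous_const, fun _ _ => continuous_const,
      fun _ _ => continuousAt_const, empty_subset _⟩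
  obtain ⟨L, hLc, hLA, hAL⟩ := hm
  obtain ⟨S, hSL, hS⟩ := hA.exists_subset_closure_eq_union hAL
  have hSne : S.Nonempty := closure_nonempty_iff.1 (hAne.mono (hS ▸ subset_union_right))
  have hLne : L.Nonempty := hAne.mono hLA.subset
  -- On `A` both distances vanish, and `0 / 0 = 0`.
  set g : X → ℝ := fun x => infDist x L / (infDist x L + infDist x S)
  have hpos : ∀ x ∉ A, 0 < infDist x L + infDist x S := by
    intro x hx
    by_contra! hle
    have hL0 : 0 ≤ infDist x L := infDist_nonneg
    have hS0 : 0 ≤ infDist x S := infDist_nonneg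
    have hxL : x ∈ L := (hLc.mem_iff_infDist_zero hLne).2 (by linarith)
    have hxS : x ∈ closure S := (mem_closure_iff_infDist_zero hSne).2 (by linarith)
    rcases hS ▸ hxS with hxS | hxA
    · exact hSL hxS hxL
    · exact hx hxA
  have hg01 : ∀ x, g x ∈ Icc 0 1 := fun x =>
    have hden : 0 ≤ infDist x L + infDist x S := add_nonneg infDist_nonneg infDist_nonneg
    ⟨div_nonneg infDist_nonneg hden,
      div_le_one_of_le₀ (le_add_of_nonneg_right infDist_nonneg) hden⟩
  have hgL : ∀ x ∈ L, g x = 0 := fun x hx => by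
    simp [g, (hLc.mem_iff_infDist_zero hLne).1 hx]
  have hcont : ∀ x ∉ A, ContinuousAt g x := fun x hx =>
    ((continuous_infDist_pt L).continuousAt.div
      ((continuous_infDist_pt L).add (continuous_infDist_pt S)).continuousAt (hpos x hx).ne')
  have hgS : ∀ x ∈ S, g x = 1 := fun x hx => by
    have hxL : 0 < infDist x L := (hLc.notMem_iff_infDist_pos hLne).1 (hSL hx)
    simp [g, infDist_zero_of_mem hx, hxL.ne']
  have hg0 : ∀ x ∈ A, g x = 0 := fun x hx => hgL x (hLA.subset hx)
  refine ⟨g, hg01, hg0,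
    lowerSemicontinuous_of_continuousAt_of_isMinOn
      (fun x hx y _ => (hg0 x hx).trans_le (hg01 y).1) hcont,
    hLA.linearlyContinuous hgL hcont, hcont, ?_⟩
  calc A ⊆ closure S := hS ▸ subset_union_right
    _ ⊆ closure {x | g x = 1} := closure_mono hgS

theorem stmt6_general {X : Type*} [AddCommGroup X] [Module ℝ X] [TopologicalSpace X]
    [IsTopologicalAddGroup X] [ContinuousSMul ℝ X] [MetrizableSpace X]
    (E : Set X) (hE : SigmaLMiserable E) :
    ∃ f : X → ℝ, (∀ x, f x ∈ Set.Icc (0 : ℝ) 1) ∧ LowerSemicontinuous f ∧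
      LinearlyContinuous f ∧ {x : X | ¬ ContinuousAt f x} = E := by
  let := metrizableSpaceMetric X
  obtain ⟨A, hA, rfl⟩ := hE
  choose g hg01 hg0 hlsc hlin hcont hclosure using
    fun n => (hA n).2.exists_linearlyContinuous_jump_function (hA n).1
  have hw : Summable fun n : ℕ => (1 : ℝ) / 2 / 2 ^ n := summable_geometric_two' 1
  have hw0 : ∀ n : ℕ, (0 : ℝ) ≤ 1 / 2 / 2 ^ n := fun n => by positivity
  refine ⟨fun x => ∑' n, 1 / 2 / 2 ^ n * g n x,
    tsum_mul_mem_Icc hw hw0 (tsum_geometric_two' 1) hg01,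
    lowerSemicontinuous_tsum_mul hw hw0 hg01 hlsc, linearlyContinuous_tsum_mul hw hw0 hg01 hlin, ?_⟩
  ext x
  simp only [Set.mem_ofPred_eq, mem_iUnion]
  constructor
  · contrapose!
    exact fun hx => continuousAt_tsum_mul hw hw0 hg01 fun n => hcont n x (hx n)
  · rintro ⟨n, hn⟩
    exact not_continuousAt_tsum_mul hw hw0 hg01 hlsc (by positivity) (hg0 n x hn) (hclosure n hn)

/-- For any σ̄-ℓ-miserable set `E` in a metrizable topological vector space there is a
lower semicontinuous linearly continuous function `f : X → [0,1]` whose set of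
discontinuity points is exactly `E`. -/
theorem stmt6 {X : Type*} [AddCommGroup X] [Module ℝ X] [TopologicalSpace X]
    [IsTopologicalAddGroup X] [ContinuousSMul ℝ X] [T2Space X] [MetrizableSpace X]
    (E : Set X) (hE : SigmaLMiserable E) :
    ∃ f : X → ℝ, (∀ x, f x ∈ Set.Icc (0 : ℝ) 1) ∧ LowerSemicontinuous f ∧
      LinearlyContinuous f ∧ {x : X | ¬ ContinuousAt f x} = E :=
  stmt6_general E hE
end

section
/- Any nowhere dense subset of the boundary ∂U of an open convex set U in a real normed space X is ℓ-miserable in X. -/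
open Topology Filter Set TopologicalSpace

/-!
Take `L = Uᶜ ∪ {x | d(x, A)² ≤ d(x, Uᶜ)}`, which is closed. It is an ℓ-neighbourhood of `A`:
a ray from `a ∈ A` either stays outside `U`, or enters `U`, and then by convexity its distance
to `Uᶜ` grows at least linearly while its distance to `A` grows at most linearly, so the square
of the latter is eventually dominated. Near a point of `∂U` outside `closure A`, points of `U`
have small `d(x, Uᶜ)` but not small `d(x, A)`, so they lie outside `L`; since `A` is nowhere
dense in `∂U`, such boundary points accumulate at every point of `A`.
-/

open Metric

section

variable {X : Type*}

theorem isLNbhd_iff_eventually [AddCommGroup X] [Module ℝ X] {L A : Set X} :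
    IsLNbhd L A ↔ ∀ a ∈ A, ∀ v : X, ∀ᶠ t in 𝓝[≥] (0 : ℝ), a + t • v ∈ L := by
  simp only [IsLNbhd, (nhdsGE_basis (0 : ℝ)).eventually_iff, mem_Ico, and_imp, gt_iff_lt]

theorem subset_closure_diff_closure_of_isNowhereDense [TopologicalSpace X] {S A : Set X}
    (hAS : A ⊆ S) (hA : IsNowhereDense (Subtype.val ⁻¹' A : Set S)) :
    S ⊆ closure (S \ closure A) := by
  have hdense : Dense (closure (Subtype.val ⁻¹' A : Set S))ᶜ :=
    interior_eq_empty_iff_dense_compl.1 hA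
  rwa [IsEmbedding.subtypeVal.closure_eq_preimage_closure_image, ← preimage_compl,
    Subtype.dense_iff, Subtype.image_preimage_coe, Subtype.image_preimage_coe,
    inter_eq_right.2 hAS] at hdense

theorem Convex.mul_infDist_compl_le [NormedAddCommGroup X] [NormedSpace ℝ X] {U : Set X}
    (hU : Convex ℝ U) {a : X} (ha : a ∈ closure U) (u : X) {s : ℝ} (hs0 : 0 ≤ s)
    (hs1 : s ≤ 1) : s * infDist u Uᶜ ≤ infDist ((1 - s) • a + s • u) Uᶜ := by
  rcases Uᶜ.eq_empty_or_nonempty with hUc | hUc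
  · simp [hUc]
  rcases hs0.eq_or_lt with rfl | hs
  · simpa using infDist_nonneg
  refine (le_infDist hUc).2 fun y hy => ?_
  by_contra! hlt
  set x := (1 - s) • a + s • u
  -- `y` is the image of `u'` under the homothety centred at `a` with ratio `s`
  set u' := u + s⁻¹ • (y - x)
  have hu' : u' ∈ interior U := by
    have hball : ball u (infDist u Uᶜ) ⊆ interior U :=
      interior_maximal (fun z hz => by simpa using ball_infDist_subset_compl hz) isOpen_ball
    refine hball ?_
    rw [mem_ball, dist_eq_norm, add_sub_cancel_left, norm_smul, norm_inv, Real.norm_of_nonneg hs0,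
      ← dist_eq_norm, dist_comm, inv_mul_lt_iff₀ hs]
    exact hlt
  have hy' : y = (1 - s) • a + s • u' := by
    simp only [u', x, smul_add, smul_smul, mul_inv_cancel₀ hs.ne', one_smul]
    abel
  exact hy (interior_subset (hy' ▸ hU.combo_closure_interior_mem_interior ha hu'
    (by linarith) hs (by ring)))

def parabolicNbhd [PseudoMetricSpace X] (U B : Set X) : Set X :=
  Uᶜ ∪ {x | infDist x B ^ 2 ≤ infDist x Uᶜ}

theorem isClosed_parabolicNbhd [PseudoMetricSpace X] {U : Set X} (hU : IsOpen U) (B : Set X) :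
    IsClosed (parabolicNbhd U B) :=
  hU.isClosed_compl.union <|
    isClosed_le ((continuous_infDist_pt B).pow 2) (continuous_infDist_pt _)

theorem frontier_diff_closure_subset_closure_compl_parabolicNbhd [PseudoMetricSpace X]
    {U B : Set X} (hB : B.Nonempty) : frontier U \ closure B ⊆ closure (parabolicNbhd U B)ᶜ := by
  rintro w ⟨hwU, hwB⟩
  set N := {x | infDist x Uᶜ < infDist x B ^ 2}
  have hN : IsOpen N :=
    isOpen_lt (continuous_infDist_pt _) ((continuous_infDist_pt B).pow 2)
  have hwN : w ∈ N := by
    rw [mem_ofPred_eq, infDist_zero_of_mem_closure (frontier_compl U ▸ hwU).1]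
    exact pow_pos ((infDist_pos_iff_notMem_closure hB).1 hwB) 2
  refine closure_mono (fun x hx => ?_) (hN.inter_closure ⟨hwN, hwU.1⟩)
  simp only [parabolicNbhd, mem_compl_iff, mem_union, mem_ofPred_eq, not_or, not_not, not_le]
  exact ⟨hx.2, hx.1⟩

theorem eventually_add_smul_mem_parabolicNbhd [NormedAddCommGroup X] [NormedSpace ℝ X]
    {U B : Set X} (hUo : IsOpen U) (hUc : Convex ℝ U) {a : X} (haB : a ∈ B)
    (haU : a ∈ frontier U) (v : X) : ∀ᶠ t in 𝓝[≥] (0 : ℝ), a + t • v ∈ parabolicNbhd U B := by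
  by_cases h : ∃ δ : ℝ, 0 < δ ∧ a + δ • v ∈ U
  · obtain ⟨δ, hδ, hu⟩ := h
    have haU' : a ∈ Uᶜ := (hUo.frontier_eq ▸ haU).2
    set r := infDist (a + δ • v) Uᶜ
    have hr : 0 < r := (hUo.isClosed_compl.notMem_iff_infDist_pos ⟨a, haU'⟩).1 (not_not.2 hu)
    have hsmall : ∀ᶠ t in 𝓝[≥] (0 : ℝ), t ≤ δ ∧ t * (δ * ‖v‖ ^ 2) ≤ r := by
      refine nhdsWithin_le_nhds (Filter.Eventually.and (eventually_le_nhds hδ) ?_)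
      exact ((continuous_mul_const _).tendsto' 0 0 (zero_mul _)).eventually (eventually_le_nhds hr)
    filter_upwards [hsmall, self_mem_nhdsWithin] with t ⟨htδ, htr⟩ (ht : 0 ≤ t)
    right
    have hB : infDist (a + t • v) B ≤ t * ‖v‖ := by
      simpa [norm_smul, abs_of_nonneg ht] using infDist_le_dist_of_mem (x := a + t • v) haB
    have hcone : t / δ * r ≤ infDist (a + t • v) Uᶜ := by
      convert hUc.mul_infDist_compl_le haU.1 (a + δ • v) (div_nonneg ht hδ.le)
        ((div_le_one hδ).2 htδ) using 2
      rw [smul_add, smul_smul, div_mul_cancel₀ t hδ.ne']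
      module
    calc infDist (a + t • v) B ^ 2 ≤ (t * ‖v‖) ^ 2 := by gcongr; exact infDist_nonneg
      _ = t * (t * (δ * ‖v‖ ^ 2)) / δ := by field_simp
      _ ≤ t * r / δ := by gcongr
      _ = t / δ * r := by ring
      _ ≤ _ := hcone
  · push Not at h
    filter_upwards [self_mem_nhdsWithin] with t (ht : 0 ≤ t)
    rcases ht.eq_or_lt with rfl | ht
    · right
      simp [infDist_zero_of_mem haB, infDist_nonneg]
    · exact Or.inl (h t ht)

theorem isLNbhd_parabolicNbhd [NormedAddCommGroup X] [NormedSpace ℝ X] {U A : Set X}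
    (hUo : IsOpen U) (hUc : Convex ℝ U) (hA : A ⊆ frontier U) :
    IsLNbhd (parabolicNbhd U A) A :=
  isLNbhd_iff_eventually.2 fun _ ha =>
    eventually_add_smul_mem_parabolicNbhd hUo hUc ha (hA ha)

end

/-- Any subset of the boundary of an open convex set in a real normed space that is nowhere
dense in the boundary is ℓ-miserable. -/
theorem stmt7 {X : Type*} [NormedAddCommGroup X] [NormedSpace ℝ X]
    (U : Set X) (hUo : IsOpen U) (hUc : Convex ℝ U)
    (A : Set X) (hA : A ⊆ frontier U)
    (hnd : IsNowhereDense ((Subtype.val ⁻¹' A : Set (frontier U)))) :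
    LMiserable A :=
  ⟨parabolicNbhd U A, isClosed_parabolicNbhd hUo A, isLNbhd_parabolicNbhd hUo hUc hA,
    fun a ha => closure_minimal
      (frontier_diff_closure_subset_closure_compl_parabolicNbhd ⟨a, ha⟩) isClosed_closure
      (subset_closure_diff_closure_of_isNowhereDense hA hnd (hA ha))⟩
end

section
/- For any open set U in a Hausdorff topological vector space X over ℝ and any point x ∈ U, there exists an open x-conical set V ⊆ U containing x in its closure that is a neighborhood of x (i.e., there exists an open x-conical neighborhood V ⊆ U of x). -/
/-!
A set star-convex at `x` is `x`-conical, and `x` has arbitrarily small open star-convex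
neighborhoods: `x + interior B` for a balanced neighborhood `B` of `0`, which is again balanced.
-/

open Topology Filter Set TopologicalSpace

theorem StarConvex.conicalAt {X : Type*} [AddCommGroup X] [Module ℝ X] {x : X} {V : Set X}
    (hV : StarConvex ℝ x V) (hne : V.Nonempty) : ConicalAt x V :=
  ⟨hne, fun _ hu t ht₀ ht₁ => hV hu (by linarith) ht₀.le (by ring)⟩

theorem exists_isOpen_starConvex_subset {X : Type*} [AddCommGroup X] [Module ℝ X]
    [TopologicalSpace X] [IsTopologicalAddGroup X] [ContinuousSMul ℝ X] {x : X} {U : Set X}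
    (hU : U ∈ 𝓝 x) : ∃ V : Set X, IsOpen V ∧ StarConvex ℝ x V ∧ x ∈ V ∧ V ⊆ U := by
  set B := interior (balancedCore ℝ ((x + ·) ⁻¹' U))
  have hcore : balancedCore ℝ ((x + ·) ⁻¹' U) ∈ 𝓝 (0 : X) :=
    balancedCore_mem_nhds_zero ((continuous_const_add x).tendsto' 0 x (add_zero x) hU)
  have hB : StarConvex ℝ (-x + x) B := by
    rw [neg_add_cancel]
    exact ((balancedCore_balanced _).interior (mem_interior_iff_mem_nhds.2 hcore)).starConvex
  refine ⟨(-x + ·) ⁻¹' B, isOpen_interior.preimage (continuous_const_add _),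
    hB.preimage_add_right, ?_, fun y hy => ?_⟩
  · simpa only [mem_preimage, neg_add_cancel] using mem_interior_iff_mem_nhds.2 hcore
  · simpa using balancedCore_subset _ (interior_subset hy)

theorem stmt10_general {X : Type*} [AddCommGroup X] [Module ℝ X] [TopologicalSpace X]
    [IsTopologicalAddGroup X] [ContinuousSMul ℝ X]
    (U : Set X) (hU : IsOpen U) (x : X) (hx : x ∈ U) :
    ∃ V : Set X, IsOpen V ∧ ConicalAt x V ∧ V ⊆ U ∧ V ∈ 𝓝 x := by
  obtain ⟨V, hVo, hVstar, hxV, hVU⟩ := exists_isOpen_starConvex_subset (hU.mem_nhds hx)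
  exact ⟨V, hVo, hVstar.conicalAt ⟨x, hxV⟩, hVU, hVo.mem_nhds hxV⟩

/-- For any open set `U` in a Hausdorff topological vector space and any `x ∈ U` there is
an open `x`-conical neighborhood `V ⊆ U` of `x`. -/
theorem stmt10 {X : Type*} [AddCommGroup X] [Module ℝ X] [TopologicalSpace X]
    [IsTopologicalAddGroup X] [ContinuousSMul ℝ X] [T2Space X]
    (U : Set X) (hU : IsOpen U) (x : X) (hx : x ∈ U) :
    ∃ V : Set X, IsOpen V ∧ ConicalAt x V ∧ V ⊆ U ∧ V ∈ 𝓝 x :=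
  stmt10_general U hU x hx
end

section
/- Every conically quasi-continuous function f : X → Y from a Hausdorff topological vector space X over ℝ to a topological space Y is quasi-continuous. -/
open Topology Filter Set TopologicalSpace

-- The largest subset of `A` that is star-shaped at `x`, as soon as `x ∈ A`.
def starCore {X : Type*} [AddCommGroup X] [Module ℝ X] (x : X) (A : Set X) : Set X :=
  {u | segment ℝ x u ⊆ A}

section StarCore

variable {X : Type*} [AddCommGroup X] [Module ℝ X] {x : X} {A : Set X}

theorem mem_starCore_iff {u : X} :
    u ∈ starCore x A ↔ ∀ t ∈ Icc (0 : ℝ) 1, (1 - t) • x + t • u ∈ A := by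
  simp only [starCore, mem_ofPred_eq, segment_eq_image, image_subset_iff]
  rfl

theorem starCore_subset : starCore x A ⊆ A :=
  fun u hu ↦ hu (right_mem_segment ℝ x u)

theorem self_mem_starCore (hx : x ∈ A) : x ∈ starCore x A := by
  simpa [starCore, segment_same] using hx

theorem conicalAt_starCore (hx : x ∈ A) : ConicalAt x (starCore x A) := by
  refine ⟨⟨x, self_mem_starCore hx⟩, fun u hu t ht₀ ht₁ ↦ ?_⟩
  have hmem : (1 - t) • x + t • u ∈ segment ℝ x u :=
    ⟨1 - t, t, by linarith, ht₀.le, by ring, rfl⟩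
  exact ((convex_segment x u).segment_subset (left_mem_segment ℝ x u) hmem).trans hu

theorem isOpen_starCore [TopologicalSpace X] [ContinuousAdd X] [ContinuousSMul ℝ X]
    (hA : IsOpen A) : IsOpen (starCore x A) := by
  refine isOpen_iff_mem_nhds.2 fun u hu ↦ ?_
  have hseg : Continuous fun p : X × ℝ ↦ (1 - p.2) • x + p.2 • p.1 := by fun_prop
  -- The tube lemma over the compact parameter interval `[0, 1]`.
  have hnear : ∀ᶠ v in 𝓝 u, ∀ t ∈ Icc (0 : ℝ) 1, (1 - t) • x + t • v ∈ A :=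
    isCompact_Icc.eventually_forall_of_forall_eventually fun t ht ↦
      hseg.continuousAt.eventually (hA.mem_nhds (mem_starCore_iff.1 hu t ht))
  filter_upwards [hnear] with v hv using mem_starCore_iff.2 hv

end StarCore

theorem exists_isOpen_conicalAt_subset_of_mem_nhds {X : Type*} [AddCommGroup X] [Module ℝ X]
    [TopologicalSpace X] [ContinuousAdd X] [ContinuousSMul ℝ X] {x : X} {V : Set X}
    (hV : V ∈ 𝓝 x) : ∃ U, IsOpen U ∧ ConicalAt x U ∧ U ⊆ V := by
  obtain ⟨A, hAV, hA, hxA⟩ := mem_nhds_iff.1 hV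
  exact ⟨starCore x A, isOpen_starCore hA, conicalAt_starCore hxA, starCore_subset.trans hAV⟩

theorem stmt11_general {X Y : Type*} [AddCommGroup X] [Module ℝ X] [TopologicalSpace X]
    [IsTopologicalAddGroup X] [ContinuousSMul ℝ X] [TopologicalSpace Y]
    (f : X → Y) (hf : ConicallyQuasiContinuous f) :
    QuasiContinuous f := by
  intro x V hV W hW
  obtain ⟨V', hV'open, hV'con, hV'V⟩ := exists_isOpen_conicalAt_subset_of_mem_nhds hV
  obtain ⟨W', hW'W, hW'open, hxW'⟩ := mem_nhds_iff.1 hW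
  obtain ⟨U, hUopen, hUcon, hUV', hfU⟩ := hf x V' hV'open hV'con W' hW'open hxW'
  exact ⟨U, hUopen, hUcon.1, hUV'.trans hV'V, hfU.trans hW'W⟩

/-- Every conically quasi-continuous function on a Hausdorff topological vector space is
quasi-continuous. -/
theorem stmt11 {X Y : Type*} [AddCommGroup X] [Module ℝ X] [TopologicalSpace X]
    [IsTopologicalAddGroup X] [ContinuousSMul ℝ X] [T2Space X] [TopologicalSpace Y]
    (f : X → Y) (hf : ConicallyQuasiContinuous f) :
    QuasiContinuous f :=
  stmt11_general f hf
end

section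
/- Let f : X → Y be a BP-measurable linearly continuous function from a Baire topological vector space X over ℝ to a topological space Y. For any point x ∈ X, any functionally open neighborhood W ⊆ Y of f(x) and any x-conical open set V ⊆ X, there exist an x-conical open set U ⊆ V and a dense G_δ-subset G of U such that f(G) ⊆ W. -/
/-!
Shrink `W` to a closed neighbourhood `C = g⁻¹(closedBall)` of `f x`; then `A = f⁻¹(C)` has the
Baire property. By linear continuity every `u` has a shrunk segment `homothety x t u`,
`0 < t < 1/(n+1)`, inside `A`, and the set of such `u` is a countable intersection of homothetic
copies of `A` (closedness of `C` lets rational `t` suffice), hence Baire measurable. By the Baire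
category theorem one of these sets is comeagre in a nonempty open `B ⊆ V`. Then `A` is comeagre
in every homothetic copy `homothety x s '' B`, `0 < s < 1/(n+1)`, so by Banach's category theorem
also in their union, the truncated cone over `B`, which is open and `x`-conical.
-/

open Topology Filter Set TopologicalSpace

open AffineMap

section Baire

variable {X : Type*} [TopologicalSpace X]

theorem HasBaireProperty.baireMeasurableSet {A : Set X} (h : HasBaireProperty A) :
    BaireMeasurableSet A := by
  obtain ⟨O, hO, hOA⟩ := h
  refine hO.baireMeasurableSet.congr (eventuallyEq_set.mpr (mem_of_superset hOA ?_))
  intro p hp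
  simp only [mem_compl_iff, mem_symmDiff, not_or, not_and, not_not] at hp
  exact ⟨hp.1, hp.2⟩

theorem isMeagre_diff_of_residualEq {s t : Set X} (h : s =ᵇ t) : IsMeagre (s \ t) := by
  have h' := h.diff (EventuallyEq.refl _ t)
  rw [sdiff_self] at h'
  exact eventuallyEq_empty.mp h'

variable [BaireSpace X]

theorem exists_isOpen_isMeagre_diff_of_subset_iUnion {ι : Type*} [Countable ι] {V : Set X}
    {G : ι → Set X} (hV : IsOpen V) (hVne : V.Nonempty) (hG : ∀ n, BaireMeasurableSet (G n))
    (hVG : V ⊆ ⋃ n, G n) :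
    ∃ n, ∃ B, IsOpen B ∧ B.Nonempty ∧ B ⊆ V ∧ IsMeagre (B \ G n) := by
  obtain ⟨n, hn⟩ : ∃ n, ¬IsMeagre (V ∩ G n) := by
    by_contra! h
    refine not_isMeagre_of_isOpen hV hVne ((isMeagre_iUnion h).mono fun p hp => ?_)
    obtain ⟨n, hn⟩ := mem_iUnion.mp (hVG hp)
    exact mem_iUnion.mpr ⟨n, hp, hn⟩
  obtain ⟨D, hDo, hD⟩ := (hV.baireMeasurableSet.inter (hG n)).residualEq_isOpen
  refine ⟨n, D ∩ V, hDo.inter hV, ?_, inter_subset_right, ?_⟩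
  · by_contra hB
    refine hn ((isMeagre_diff_of_residualEq hD).mono fun p hp => ?_)
    exact ⟨hp, fun hpD => hB ⟨p, hpD, hp.1⟩⟩
  · refine (isMeagre_diff_of_residualEq hD.symm).mono fun p hp => ?_
    exact ⟨hp.1.1, fun h => hp.2 h.2⟩

/-- Banach's category theorem, for Baire measurable sets. -/
theorem BaireMeasurableSet.isMeagre_diff_of_forall_exists {A U : Set X}
    (hA : BaireMeasurableSet A)
    (hU : ∀ p ∈ U, ∃ O, IsOpen O ∧ p ∈ O ∧ IsMeagre (O \ A)) : IsMeagre (U \ A) := by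
  obtain ⟨D, hDo, hAD⟩ := hA.residualEq_isOpen
  have hUD : U ⊆ closure D := by
    intro p hp
    obtain ⟨O, hO, hpO, hOA⟩ := hU p hp
    by_contra hpD
    refine not_isMeagre_of_isOpen (hO.inter isClosed_closure.isOpen_compl) ⟨p, hpO, hpD⟩ ?_
    refine (hOA.union (isMeagre_diff_of_residualEq hAD)).mono fun q hq => ?_
    by_cases hqA : q ∈ A
    · exact Or.inr ⟨hqA, fun hqD => hq.2 (subset_closure hqD)⟩
    · exact Or.inl ⟨hq.1, hqA⟩
  exact (isMeagre_diff_of_residualEq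
    ((closure_residualEq hDo.isLocallyClosed).trans hAD.symm)).mono (sdiff_subset_sdiff_left hUD)

theorem exists_isGδ_dense_subset_of_isMeagre_diff {U A : Set X} (hU : IsOpen U)
    (hUA : IsMeagre (U \ A)) :
    ∃ G : Set X, G ⊆ U ∧ IsGδ (Subtype.val ⁻¹' G : Set U) ∧
      Dense (Subtype.val ⁻¹' G : Set U) ∧ G ⊆ A := by
  obtain ⟨T, hTUA, hTG, hTd⟩ := mem_residual.mp hUA
  refine ⟨U ∩ T, inter_subset_left, (hU.isGδ.inter hTG).preimage continuous_subtype_val,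
    (hTd.preimage hU.isOpenMap_subtype_val).mono fun z hz => ⟨z.2, hz⟩, ?_⟩
  rintro p ⟨hpU, hpT⟩
  by_contra hpA
  exact hTUA hpT ⟨hpU, hpA⟩

end Baire

theorem FunctionallyOpen.exists_isClosed_mem_nhds {Y : Type*} [TopologicalSpace Y] {W : Set Y}
    {y : Y} (hW : FunctionallyOpen W) (hy : y ∈ W) :
    ∃ C, IsClosed C ∧ FunctionallyOpen Cᶜ ∧ C ∈ 𝓝 y ∧ C ⊆ W := by
  obtain ⟨g, hg, O, hO, rfl⟩ := hW
  obtain ⟨ε, hε, hεO⟩ := Metric.isOpen_iff.mp hO (g y) hy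
  refine ⟨g ⁻¹' Metric.closedBall (g y) (ε / 2), Metric.isClosed_closedBall.preimage hg,
    ⟨g, hg, _, Metric.isClosed_closedBall.isOpen_compl, rfl⟩,
    hg.continuousAt.preimage_mem_nhds (Metric.closedBall_mem_nhds _ (half_pos hε)), ?_⟩
  exact preimage_mono ((Metric.closedBall_subset_ball (half_lt_self hε)).trans hεO)

section Cone

variable {X Y : Type*} [AddCommGroup X] [Module ℝ X]

theorem homothety_eq_sub_smul_add_smul (x u : X) (t : ℝ) :
    homothety x t u = (1 - t) • x + t • u := by
  rw [homothety_eq_lineMap, lineMap_apply_module]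

def radialCore (x : X) (A : Set X) (r : ℝ) : Set X :=
  {u | ∀ t ∈ Ioo 0 r, homothety x t u ∈ A}

def truncatedCone (x : X) (B : Set X) (r : ℝ) : Set X :=
  ⋃ s ∈ Ioo 0 r, homothety x s '' B

theorem mem_truncatedCone {x p : X} {B : Set X} {r : ℝ} :
    p ∈ truncatedCone x B r ↔ ∃ s ∈ Ioo 0 r, ∃ b ∈ B, homothety x s b = p := by
  simp only [truncatedCone, mem_iUnion₂, mem_image, exists_prop]

theorem conicalAt_truncatedCone {x : X} {B : Set X} {r : ℝ} (hB : B.Nonempty) (hr : 0 < r) :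
    ConicalAt x (truncatedCone x B r) := by
  obtain ⟨b, hb⟩ := hB
  refine ⟨⟨_, mem_truncatedCone.mpr ⟨r / 2, ⟨half_pos hr, half_lt_self hr⟩, b, hb, rfl⟩⟩, ?_⟩
  intro u hu t ht0 ht1
  obtain ⟨s, hs, b, hb, rfl⟩ := mem_truncatedCone.mp hu
  refine mem_truncatedCone.mpr ⟨t * s, ⟨mul_pos ht0 hs.1, ?_⟩, b, hb, ?_⟩
  · exact (mul_lt_of_lt_one_left hs.1 ht1).trans hs.2
  · rw [homothety_mul_apply, homothety_eq_sub_smul_add_smul]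

theorem ConicalAt.truncatedCone_subset {x : X} {B V : Set X} {r : ℝ} (hV : ConicalAt x V)
    (hBV : B ⊆ V) (hr : r ≤ 1) : truncatedCone x B r ⊆ V := by
  intro p hp
  obtain ⟨s, hs, b, hb, rfl⟩ := mem_truncatedCone.mp hp
  rw [homothety_eq_sub_smul_add_smul]
  exact hV.2 b (hBV hb) s hs.1 (hs.2.trans_le hr)

variable [TopologicalSpace X] [TopologicalSpace Y] {f : X → Y}

theorem LinearlyContinuous.continuous_homothety (hf : LinearlyContinuous f) (x u : X) :
    Continuous fun t : ℝ => f (homothety x t u) := by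
  convert hf x (u - x) using 2 with t
  rw [homothety_apply, vsub_eq_sub, vadd_eq_add, add_comm]

/-- `{t | f (homothety x t u) ∈ C}` is closed, so its rational points determine it on
`Ioo 0 r`. -/
theorem LinearlyContinuous.radialCore_preimage_eq (hf : LinearlyContinuous f) {C : Set Y}
    (hC : IsClosed C) (x : X) (r : ℝ) :
    radialCore x (f ⁻¹' C) r =
      ⋂ (q : ℚ) (_ : (q : ℝ) ∈ Ioo 0 r), homothety x (q : ℝ) ⁻¹' (f ⁻¹' C) := by
  refine Subset.antisymm (fun u hu => mem_iInter₂.mpr fun q hq => hu q hq) fun u hu => ?_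
  have hS : IsClosed {t : ℝ | f (homothety x t u) ∈ C} :=
    hC.preimage (hf.continuous_homothety x u)
  have hQ : Ioo 0 r ∩ range ((↑) : ℚ → ℝ) ⊆ {t : ℝ | f (homothety x t u) ∈ C} := by
    rintro _ ⟨hq, q, rfl⟩
    exact mem_iInter₂.mp hu q hq
  exact (Rat.denseRange_cast.open_subset_closure_inter isOpen_Ioo).trans (closure_minimal hQ hS)

theorem LinearlyContinuous.iUnion_radialCore_eq_univ (hf : LinearlyContinuous f) {x : X}
    {C : Set Y} (hC : C ∈ 𝓝 (f x)) : ⋃ n : ℕ, radialCore x (f ⁻¹' C) (1 / (n + 1)) = univ := by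
  refine eq_univ_of_forall fun u => ?_
  have hcont := (hf.continuous_homothety x u).tendsto 0
  rw [homothety_zero, const_apply] at hcont
  obtain ⟨ε, hε, hεC⟩ := Metric.eventually_nhds_iff.mp (hcont hC)
  obtain ⟨n, hn⟩ := exists_nat_one_div_lt hε
  refine mem_iUnion.mpr ⟨n, fun t ht => hεC ?_⟩
  rw [Real.dist_0_eq_abs, abs_of_pos ht.1]
  exact ht.2.trans hn

variable [IsTopologicalAddGroup X] [ContinuousSMul ℝ X]

theorem isOpen_truncatedCone {x : X} {B : Set X} (hB : IsOpen B) (r : ℝ) :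
    IsOpen (truncatedCone x B r) :=
  isOpen_biUnion fun _ hs => homothety_isOpenMap x _ hs.1.ne' B hB

theorem isMeagre_homothety_image (x : X) {t : ℝ} (ht : t ≠ 0) {M : Set X} (hM : IsMeagre M) :
    IsMeagre (homothety x t '' M) := by
  rw [image_eq_preimage_of_inverse (g := homothety x t⁻¹)]
  · exact hM.preimage_of_isOpenMap (homothety_continuous x _)
      (homothety_isOpenMap x _ (inv_ne_zero ht))
  · intro u
    rw [← homothety_mul_apply, inv_mul_cancel₀ ht, homothety_one, id_apply]
  · intro u
    rw [← homothety_mul_apply, mul_inv_cancel₀ ht, homothety_one, id_apply]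

theorem LinearlyContinuous.baireMeasurableSet_radialCore (hf : LinearlyContinuous f)
    {C : Set Y} (hC : IsClosed C) (hA : BaireMeasurableSet (f ⁻¹' C)) (x : X) (r : ℝ) :
    BaireMeasurableSet (radialCore x (f ⁻¹' C) r) := by
  rw [hf.radialCore_preimage_eq hC]
  exact .iInter fun q => .iInter fun hq =>
    hA.preimage (homothety_continuous x _) (homothety_isOpenMap x _ hq.1.ne')

variable [BaireSpace X]

theorem isMeagre_truncatedCone_diff {A B : Set X} {x : X} {r : ℝ} (hA : BaireMeasurableSet A)
    (hB : IsOpen B) (hBA : IsMeagre (B \ radialCore x A r)) :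
    IsMeagre (truncatedCone x B r \ A) := by
  refine hA.isMeagre_diff_of_forall_exists fun p hp => ?_
  obtain ⟨s, hs, b, hb, rfl⟩ := mem_truncatedCone.mp hp
  refine ⟨homothety x s '' B, homothety_isOpenMap x s hs.1.ne' B hB, mem_image_of_mem _ hb,
    (isMeagre_homothety_image x hs.1.ne' hBA).mono ?_⟩
  rintro _ ⟨⟨c, hc, rfl⟩, hcA⟩
  exact mem_image_of_mem _ ⟨hc, fun hcA' => hcA (hcA' s hs)⟩

end Cone

theorem stmt13_general {X Y : Type*} [AddCommGroup X] [Module ℝ X] [TopologicalSpace X]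
    [IsTopologicalAddGroup X] [ContinuousSMul ℝ X] [BaireSpace X]
    [TopologicalSpace Y]
    (f : X → Y) (hBP : BPMeasurable f) (hlin : LinearlyContinuous f)
    (x : X) (W : Set Y) (hW : FunctionallyOpen W) (hfxW : f x ∈ W)
    (V : Set X) (hVo : IsOpen V) (hVc : ConicalAt x V) :
    ∃ U : Set X, IsOpen U ∧ ConicalAt x U ∧ U ⊆ V ∧
      ∃ G : Set X, G ⊆ U ∧ IsGδ (Subtype.val ⁻¹' G : Set U) ∧
        Dense (Subtype.val ⁻¹' G : Set U) ∧ f '' G ⊆ W := by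
  obtain ⟨C, hCc, hCo, hCx, hCW⟩ := hW.exists_isClosed_mem_nhds hfxW
  have hA : BaireMeasurableSet (f ⁻¹' C) := (hBP _ hCo).baireMeasurableSet.of_compl
  obtain ⟨n, B, hBo, hBne, hBV, hBA⟩ := exists_isOpen_isMeagre_diff_of_subset_iUnion hVo hVc.1
    (fun n : ℕ => hlin.baireMeasurableSet_radialCore hCc hA x (1 / (n + 1)))
    (by rw [hlin.iUnion_radialCore_eq_univ hCx]; exact subset_univ V)
  have hr : (0 : ℝ) < 1 / (n + 1) := Nat.one_div_pos_of_nat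
  have hr1 : 1 / ((n : ℝ) + 1) ≤ 1 := div_le_one_of_le₀ (by simp) (by positivity)
  obtain ⟨G, hGU, hGδ, hGd, hGA⟩ := exists_isGδ_dense_subset_of_isMeagre_diff
    (isOpen_truncatedCone hBo _) (isMeagre_truncatedCone_diff hA hBo hBA)
  exact ⟨_, isOpen_truncatedCone hBo _, conicalAt_truncatedCone hBne hr,
    hVc.truncatedCone_subset hBV hr1, G, hGU, hGδ, hGd,
    image_subset_iff.mpr (hGA.trans (preimage_mono hCW))⟩

/-- For a BP-measurable linearly continuous function from a Baire topological vector space,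
given `x`, a functionally open neighborhood `W` of `f x` and an `x`-conical open `V`, there
are an `x`-conical open `U ⊆ V` and a dense `Gδ`-subset `G` of `U` with `f '' G ⊆ W`. -/
theorem stmt13 {X Y : Type*} [AddCommGroup X] [Module ℝ X] [TopologicalSpace X]
    [IsTopologicalAddGroup X] [ContinuousSMul ℝ X] [T2Space X] [BaireSpace X]
    [TopologicalSpace Y]
    (f : X → Y) (hBP : BPMeasurable f) (hlin : LinearlyContinuous f)
    (x : X) (W : Set Y) (hW : FunctionallyOpen W) (hfxW : f x ∈ W)
    (V : Set X) (hVo : IsOpen V) (hVc : ConicalAt x V) :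
    ∃ U : Set X, IsOpen U ∧ ConicalAt x U ∧ U ⊆ V ∧
      ∃ G : Set X, G ⊆ U ∧ IsGδ (Subtype.val ⁻¹' G : Set U) ∧
        Dense (Subtype.val ⁻¹' G : Set U) ∧ f '' G ⊆ W :=
  stmt13_general f hBP hlin x W hW hfxW V hVo hVc
end

section
/- For any F_σ-measurable quasi-continuous linearly continuous function f : X → Y from a Hausdorff topological vector space X over ℝ to a separable metrizable space Y, the set D(f) of discontinuity points of f is σ̄-ℓ-miserable in X. -/
open Topology Filter Set TopologicalSpace

/-!
Fix a countable base `𝓑` of the separable metrizable space `Y`. A point `x` is a discontinuity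
point of `f` exactly when, for some `U ∈ 𝓑`, `f x ∈ U` while `x` is a limit of points mapped
outside `closure U`; so `D(f)` is the union over `U ∈ 𝓑` of the sets
`A_U = f⁻¹(U) ∩ closure (f⁻¹(Y ∖ closure U))`. Each `A_U` is `Fσ`, since `U` is functionally open,
and `A_U` is ℓ-miserable, witnessed by `L = closure (f⁻¹(U))`: linear continuity makes `f⁻¹(U)`
an ℓ-neighborhood of itself, and quasi-continuity puts every point of `f⁻¹(Y ∖ closure U)` in the
closure of the interior of that preimage, which misses `f⁻¹(U)` and hence `L`.
-/

section

variable {X Y : Type*}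

theorem IsOpen.functionallyOpen [TopologicalSpace Y] [PerfectlyNormalSpace Y] {U : Set Y}
    (hU : IsOpen U) : FunctionallyOpen U := by
  obtain ⟨g, hg, -⟩ :=
    perfectlyNormalSpace_iff_forall_isClosed_preimage_zero.1 ‹_› Uᶜ hU.isClosed_compl
  exact ⟨g, g.continuous, {0}ᶜ, isOpen_compl_singleton, by rw [preimage_compl, ← hg, compl_compl]⟩

theorem IsFSigma.inter_isClosed [TopologicalSpace X] {s t : Set X} (hs : IsFSigma s)
    (ht : IsClosed t) : IsFSigma (s ∩ t) := by
  obtain ⟨F, hF, rfl⟩ := hs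
  exact ⟨fun n => F n ∩ t, fun n => (hF n).inter ht, iUnion_inter t F⟩

theorem setOf_not_continuousAt_eq_biUnion [TopologicalSpace X] [TopologicalSpace Y]
    [RegularSpace Y] {𝓑 : Set (Set Y)} (h𝓑 : IsTopologicalBasis 𝓑) (f : X → Y) :
    {x | ¬ ContinuousAt f x} = ⋃ U ∈ 𝓑, f ⁻¹' U ∩ closure (f ⁻¹' (closure U)ᶜ) := by
  ext x
  simp only [ContinuousAt, (h𝓑.nhds_basis_closure (f x)).tendsto_right_iff, mem_ofPred_eq,
    mem_iUnion, mem_inter_iff, mem_preimage, mem_closure_iff_frequently, not_forall,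
    not_eventually, mem_compl_iff, exists_prop]
  tauto

section QuasiContinuous

variable [TopologicalSpace X] [TopologicalSpace Y] {f : X → Y}

theorem QuasiContinuous.preimage_subset_closure_interior_preimage (hf : QuasiContinuous f)
    {W : Set Y} (hW : IsOpen W) : f ⁻¹' W ⊆ closure (interior (f ⁻¹' W)) := by
  intro x hx
  rw [mem_closure_iff]
  intro O hO hxO
  obtain ⟨V, hV, ⟨v, hv⟩, hVO, hVW⟩ := hf x O (hO.mem_nhds hxO) W (hW.mem_nhds hx)
  exact ⟨v, hVO hv, hV.subset_interior_iff.2 (image_subset_iff.1 hVW) hv⟩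

theorem QuasiContinuous.closure_preimage_compl_closure_subset (hf : QuasiContinuous f)
    (U : Set Y) : closure (f ⁻¹' (closure U)ᶜ) ⊆ closure (closure (f ⁻¹' U))ᶜ :=
  calc closure (f ⁻¹' (closure U)ᶜ)
      ⊆ closure (interior (f ⁻¹' (closure U)ᶜ)) :=
        closure_minimal (hf.preimage_subset_closure_interior_preimage
          isClosed_closure.isOpen_compl) isClosed_closure
    _ ⊆ closure (interior (f ⁻¹' U)ᶜ) :=
        closure_mono (interior_mono (preimage_mono (compl_subset_compl.2 subset_closure)))
    _ = closure (closure (f ⁻¹' U))ᶜ := by rw [interior_compl]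

end QuasiContinuous

section LMiserable

variable [AddCommGroup X] [Module ℝ X]

theorem IsLNbhd.mono {L L' A A' : Set X} (h : IsLNbhd L A) (hL : L ⊆ L') (hA : A' ⊆ A) :
    IsLNbhd L' A' := fun a ha v =>
  let ⟨ε, hε, hεL⟩ := h a (hA ha) v
  ⟨ε, hε, fun t ht htε => hL (hεL t ht htε)⟩

theorem LinearlyContinuous.isLNbhd_preimage [TopologicalSpace X] [TopologicalSpace Y] {f : X → Y}
    (hf : LinearlyContinuous f) {U : Set Y} (hU : IsOpen U) : IsLNbhd (f ⁻¹' U) (f ⁻¹' U) := by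
  intro a ha v
  have h0 : (fun t : ℝ => f (a + t • v)) ⁻¹' U ∈ 𝓝[≥] 0 :=
    mem_nhdsWithin_of_mem_nhds <| (hf a v).continuousAt.preimage_mem_nhds <|
      hU.mem_nhds (by simpa using ha)
  obtain ⟨ε, hε, hεU⟩ := mem_nhdsGE_iff_exists_Ico_subset.1 h0
  exact ⟨ε, hε, fun t ht htε => hεU ⟨ht, htε⟩⟩

variable [TopologicalSpace X]

theorem LMiserable.subset {A B : Set X} (hA : LMiserable A) (hBA : B ⊆ A) : LMiserable B :=
  let ⟨L, hL, hLA, hAL⟩ := hA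
  ⟨L, hL, hLA.mono subset_rfl hBA, hBA.trans hAL⟩

theorem IsFSigma.sigmaLMiserable {A : Set X} (hF : IsFSigma A) (hA : LMiserable A) :
    SigmaLMiserable A :=
  let ⟨F, hF, hAF⟩ := hF
  ⟨F, fun n => ⟨hF n, hA.subset (hAF ▸ subset_iUnion F n)⟩, hAF⟩

theorem sigmaLMiserable_empty : SigmaLMiserable (∅ : Set X) :=
  ⟨fun _ => ∅, fun _ => ⟨isClosed_empty, ∅, isClosed_empty, fun _ ha => ha.elim,
    empty_subset _⟩, iUnion_empty.symm⟩

theorem SigmaLMiserable.iUnion {A : ℕ → Set X} (h : ∀ n, SigmaLMiserable (A n)) :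
    SigmaLMiserable (⋃ n, A n) := by
  choose F hF hAF using h
  refine ⟨fun m => F m.unpair.1 m.unpair.2, fun m => hF _ _, ?_⟩
  rw [iUnion_unpair, iUnion_congr hAF]

theorem SigmaLMiserable.biUnion {ι : Type*} {s : Set ι} (hs : s.Countable) {A : ι → Set X}
    (h : ∀ i ∈ s, SigmaLMiserable (A i)) : SigmaLMiserable (⋃ i ∈ s, A i) := by
  rcases s.eq_empty_or_nonempty with rfl | hne
  · simpa using sigmaLMiserable_empty
  · obtain ⟨e, rfl⟩ := hs.exists_eq_range hne
    rw [biUnion_range]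
    exact .iUnion fun n => h _ (mem_range_self n)

theorem lMiserable_preimage_inter_closure_preimage_compl_closure [TopologicalSpace Y]
    {f : X → Y} (hlin : LinearlyContinuous f) (hqc : QuasiContinuous f) {U : Set Y}
    (hU : IsOpen U) : LMiserable (f ⁻¹' U ∩ closure (f ⁻¹' (closure U)ᶜ)) :=
  ⟨closure (f ⁻¹' U), isClosed_closure,
    (hlin.isLNbhd_preimage hU).mono subset_closure inter_subset_left,
    inter_subset_right.trans (hqc.closure_preimage_compl_closure_subset U)⟩

end LMiserable

end

theorem stmt15_general {X Y : Type*} [AddCommGroup X] [Module ℝ X] [TopologicalSpace X]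
    [TopologicalSpace Y] [SeparableSpace Y] [MetrizableSpace Y]
    (f : X → Y) (hFσ : FSigmaMeasurable f) (hqc : QuasiContinuous f)
    (hlin : LinearlyContinuous f) :
    SigmaLMiserable {x : X | ¬ ContinuousAt f x} := by
  let := pseudoMetrizableSpacePseudoMetric Y
  obtain ⟨𝓑, h𝓑c, -, h𝓑⟩ := exists_countable_basis Y
  rw [setOf_not_continuousAt_eq_biUnion h𝓑 f]
  refine SigmaLMiserable.biUnion h𝓑c fun U hU => ?_
  have hUo : IsOpen U := h𝓑.isOpen hU
  exact ((hFσ U hUo.functionallyOpen).inter_isClosed isClosed_closure).sigmaLMiserable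
    (lMiserable_preimage_inter_closure_preimage_compl_closure hlin hqc hUo)

/-- For an `Fσ`-measurable quasi-continuous linearly continuous function from a Hausdorff
topological vector space to a separable metrizable space, the set of discontinuity points
is σ̄-ℓ-miserable. -/
theorem stmt15 {X Y : Type*} [AddCommGroup X] [Module ℝ X] [TopologicalSpace X]
    [IsTopologicalAddGroup X] [ContinuousSMul ℝ X] [T2Space X]
    [TopologicalSpace Y] [SeparableSpace Y] [MetrizableSpace Y]
    (f : X → Y) (hFσ : FSigmaMeasurable f) (hqc : QuasiContinuous f)
    (hlin : LinearlyContinuous f) :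
    SigmaLMiserable {x : X | ¬ ContinuousAt f x} :=
  stmt15_general f hFσ hqc hlin
end
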